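/- arXiv:1308.6730 — 7 statements merged into one kernel-verified Lean document; each statement's English description precedes it below -/
import Mathlib

section
/- Let V be a real inner product space, let u₁, u₂, n ∈ V be unit vectors with n orthogonal to both u₁ and u₂, and let β ∈ [0, π/4]. Set α to be the angle between u₁ and u₂, and define v₁ = (cos β) • u₁ + (sin β) • n and v₂ = (cos β) • u₂ + (sin β) • n. Then the angle between v₁ and v₂ is at least α/2. -/
open Real InnerProductGeometry

/-!
Lifting the unit vectors `u₁, u₂` out of the plane by the angle `β` keeps them unit vectors and
turns their inner product `cos α` into `cos² β · cos α + sin² β`. Writing `t = cos (α / 2) ≥ 0`,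
this is `1 - 2 cos² β (1 - t²)`, which is at most `t` because `(1 - t) (2 cos² β (1 + t) - 1) ≥ 0`
as soon as `cos² β ≥ 1 / 2`, i.e. `|β| ≤ π / 4`.
-/

section Lift

variable {V : Type*} [NormedAddCommGroup V] [InnerProductSpace ℝ V]

theorem inner_smul_add_smul_of_inner_eq_zero {x y n : V} (hx : inner ℝ x n = (0 : ℝ))
    (hy : inner ℝ y n = (0 : ℝ)) (a b : ℝ) :
    inner ℝ (a • x + b • n) (a • y + b • n) = a ^ 2 * inner ℝ x y + b ^ 2 * ‖n‖ ^ 2 := by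
  have hy' : inner ℝ n y = (0 : ℝ) := by rw [real_inner_comm, hy]
  rw [← real_inner_self_eq_norm_sq]
  simp only [inner_add_left, inner_add_right, real_inner_smul_left, real_inner_smul_right, hx, hy']
  ring

theorem norm_cos_smul_add_sin_smul {u n : V} (hu : ‖u‖ = 1) (hn : ‖n‖ = 1)
    (hun : inner ℝ u n = (0 : ℝ)) (β : ℝ) : ‖cos β • u + sin β • n‖ = 1 := by
  have hsq : ‖cos β • u + sin β • n‖ ^ 2 = 1 := by
    rw [← real_inner_self_eq_norm_sq, inner_smul_add_smul_of_inner_eq_zero hun hun,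
      real_inner_self_eq_norm_sq, hu, hn]
    linarith [sin_sq_add_cos_sq β]
  exact (pow_eq_one_iff_of_nonneg (norm_nonneg _) two_ne_zero).mp hsq

theorem le_angle_of_inner_le_cos {x y : V} (hx : ‖x‖ = 1) (hy : ‖y‖ = 1) {θ : ℝ}
    (hθ₀ : 0 ≤ θ) (hθπ : θ ≤ π) (h : inner ℝ x y ≤ cos θ) : θ ≤ angle x y := by
  calc θ = arccos (cos θ) := (arccos_cos hθ₀ hθπ).symm
    _ ≤ arccos (inner ℝ x y) := arccos_le_arccos h
    _ = angle x y := by rw [angle, hx, hy, mul_one, div_one]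

end Lift

theorem half_le_cos_sq_of_abs_le {β : ℝ} (hβ : |β| ≤ π / 4) : 1 / 2 ≤ cos β ^ 2 := by
  have h2β : 0 ≤ cos (2 * β) := by
    apply cos_nonneg_of_mem_Icc
    constructor <;> linarith [abs_le.mp hβ]
  rw [cos_sq β]
  linarith

theorem mul_cos_add_one_sub_le_cos_half {c α : ℝ} (hc : 1 / 2 ≤ c) (hα : |α| ≤ π) :
    c * cos α + (1 - c) ≤ cos (α / 2) := by
  set t := cos (α / 2)
  have ht₀ : 0 ≤ t := by
    apply cos_nonneg_of_mem_Icc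
    constructor <;> linarith [abs_le.mp hα]
  have ht₁ : t ≤ 1 := cos_le_one _
  have hcos : cos α = 2 * t ^ 2 - 1 := by
    rw [← cos_two_mul, mul_div_cancel₀ α two_ne_zero]
  have key : 0 ≤ (1 - t) * (2 * c * (1 + t) - 1) :=
    mul_nonneg (by linarith) (by nlinarith)
  rw [hcos]
  nlinarith

/-- Lemma 1 of the paper: two unit segments each forming the same angle
`β ≤ π/4` with a plane (with a common foot on the plane) and whose
projections onto the plane form angle `α` themselves form an angle of
at least `α / 2`. -/
theorem angle_of_lifted_ge_half_angle
    {V : Type*} [NormedAddCommGroup V] [InnerProductSpace ℝ V]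
    (u₁ u₂ n : V) (hu₁ : ‖u₁‖ = 1) (hu₂ : ‖u₂‖ = 1) (hn : ‖n‖ = 1)
    (hn₁ : inner ℝ u₁ n = (0 : ℝ)) (hn₂ : inner ℝ u₂ n = (0 : ℝ))
    (β : ℝ) (hβ : β ∈ Set.Icc 0 (π / 4)) :
    angle u₁ u₂ / 2 ≤
      angle (cos β • u₁ + sin β • n) (cos β • u₂ + sin β • n) := by
  set α := angle u₁ u₂
  have hα₀ : 0 ≤ α := angle_nonneg u₁ u₂
  have hαπ : α ≤ π := angle_le_pi u₁ u₂
  have hcβ : 1 / 2 ≤ cos β ^ 2 :=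
    half_le_cos_sq_of_abs_le (by rw [abs_of_nonneg hβ.1]; exact hβ.2)
  have hinner : inner ℝ (cos β • u₁ + sin β • n) (cos β • u₂ + sin β • n)
      = cos β ^ 2 * cos α + (1 - cos β ^ 2) := by
    rw [inner_smul_add_smul_of_inner_eq_zero hn₁ hn₂, inner_eq_cos_angle_of_norm_eq_one hu₁ hu₂,
      hn]
    linarith [sin_sq_add_cos_sq β]
  apply le_angle_of_inner_le_cos (norm_cos_smul_add_sin_smul hu₁ hn hn₁ β)
    (norm_cos_smul_add_sin_smul hu₂ hn hn₂ β) (by linarith) (by linarith)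
  rw [hinner]
  exact mul_cos_add_one_sub_le_cos_half hcβ (abs_le.mpr ⟨by linarith, hαπ⟩)
end

section
/- For all real numbers α ∈ [0, π] and β ∈ [0, π/4], one has 1 − (cos β)²·(1 − cos α) ≤ cos(α/2). -/
open Real

/-- The key trigonometric step in the proof of Lemma 1 of the paper:
for `α ∈ [0, π]` and `β ∈ [0, π/4]`,
`1 - cos² β * (1 - cos α) ≤ cos (α / 2)`. -/
theorem one_sub_cos_sq_mul_le_cos_half
    (α β : ℝ) (hα : α ∈ Set.Icc 0 π) (hβ : β ∈ Set.Icc 0 (π / 4)) :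
    1 - cos β ^ 2 * (1 - cos α) ≤ cos (α / 2) := by
  obtain ⟨hα0, hαπ⟩ := hα
  obtain ⟨hβ0, hβπ⟩ := hβ
  have hc : cos α = 2 * cos (α / 2) ^ 2 - 1 := by
    have := Real.cos_sq (α / 2)
    rw [show 2 * (α / 2) = α by ring] at this
    linarith
  have hc0 : 0 ≤ cos (α / 2) := Real.cos_nonneg_of_mem_Icc ⟨by linarith, by linarith⟩
  have hc1 : cos (α / 2) ≤ 1 := Real.cos_le_one _
  have hb : Real.sqrt 2 / 2 ≤ cos β := by
    rw [← Real.cos_pi_div_four]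
    exact Real.cos_le_cos_of_nonneg_of_le_pi hβ0 (by linarith [Real.pi_pos]) hβπ
  have hb2 : (1:ℝ)/2 ≤ cos β ^ 2 := by
    nlinarith [Real.sq_sqrt (by norm_num : (2:ℝ) ≥ 0), Real.sqrt_nonneg 2]
  nlinarith [mul_nonneg (by linarith : (0:ℝ) ≤ cos β ^ 2 - 1/2)
    (by nlinarith : (0:ℝ) ≤ 1 - cos (α/2) ^ 2), mul_self_nonneg (1 - cos (α/2)),
    mul_nonneg hc0 (sub_nonneg.mpr hc1)]
end

section
/- Let a, b, c be three pairwise distinct points of EuclideanSpace ℝ (Fin 3) with ‖a‖ = ‖b‖ = ‖c‖ = 1 (i.e., three distinct points on the unit sphere centered at the origin). Then the angle between the vectors a − b and c − b is at least ‖a − c‖ / 2. -/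
/-!
The triangle `abc` is inscribed in a planar section of the unit sphere, a circle of radius
`R ≤ 1`, so by the law of sines `sin ∠abc = ‖a - c‖ / (2R) ≥ ‖a - c‖ / 2`, and `x ≥ sin x`.
Algebraically, `R ≤ 1` is the nonnegativity of the Gram determinant of `a, b, c`.
-/

open Real InnerProductGeometry
open scoped RealInnerProductSpace

section

variable {V : Type*} [NormedAddCommGroup V] [InnerProductSpace ℝ V]

theorem gram_det_nonneg_of_norm_eq_one {a b c : V} (ha : ‖a‖ = 1) (hb : ‖b‖ = 1)
    (hc : ‖c‖ = 1) :
    0 ≤ 1 + 2 * ⟪a, b⟫ * ⟪b, c⟫ * ⟪a, c⟫ - ⟪a, b⟫ ^ 2 - ⟪b, c⟫ ^ 2 - ⟪a, c⟫ ^ 2 := by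
  have h := (Matrix.posSemidef_gram ℝ ![a, b, c]).det_nonneg
  simp [Matrix.det_fin_three, ha, hb, hc, real_inner_comm a b, real_inner_comm a c,
    real_inner_comm b c] at h
  linarith

/-- The circumradius `‖a - c‖ ‖a - b‖ ‖c - b‖ / (4 area)` of the triangle `abc` is at most `1`,
where `(2 area)² = ‖a - b‖² ‖c - b‖² - ⟪a - b, c - b⟫²`. -/
theorem norm_sub_sq_mul_le_of_norm_eq_one {a b c : V} (ha : ‖a‖ = 1) (hb : ‖b‖ = 1)
    (hc : ‖c‖ = 1) :
    ‖a - c‖ ^ 2 * (‖a - b‖ ^ 2 * ‖c - b‖ ^ 2) ≤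
      4 * (‖a - b‖ ^ 2 * ‖c - b‖ ^ 2 - ⟪a - b, c - b⟫ ^ 2) := by
  have hG := gram_det_nonneg_of_norm_eq_one ha hb hc
  simp only [norm_sub_sq_real, inner_sub_left, inner_sub_right, real_inner_self_eq_norm_sq,
    ha, hb, hc, real_inner_comm c b, real_inner_comm c a] at hG ⊢
  linear_combination 4 * hG

theorem norm_sub_div_two_le_sin_angle {a b c : V} (ha : ‖a‖ = 1) (hb : ‖b‖ = 1)
    (hc : ‖c‖ = 1) (hab : a ≠ b) (hcb : c ≠ b) :
    ‖a - c‖ / 2 ≤ Real.sin (angle (a - b) (c - b)) := by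
  have hpos : 0 < ‖a - b‖ * ‖c - b‖ :=
    mul_pos (norm_pos_iff.2 (sub_ne_zero.2 hab)) (norm_pos_iff.2 (sub_ne_zero.2 hcb))
  refine le_of_mul_le_mul_right ?_ hpos
  rw [sin_angle_mul_norm_mul_norm, real_inner_self_eq_norm_sq, real_inner_self_eq_norm_sq]
  apply Real.le_sqrt_of_sq_le
  linear_combination norm_sub_sq_mul_le_of_norm_eq_one ha hb hc / 4

end

theorem angle_on_unit_sphere_ge_general
    (a b c : EuclideanSpace ℝ (Fin 3))
    (hab : a ≠ b) (hbc : b ≠ c)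
    (ha : ‖a‖ = 1) (hb : ‖b‖ = 1) (hc : ‖c‖ = 1) :
    ‖a - c‖ / 2 ≤ angle (a - b) (c - b) :=
  (norm_sub_div_two_le_sin_angle ha hb hc hab hbc.symm).trans (Real.sin_le (angle_nonneg _ _))

/-- The inscribed-angle argument in the proof of Theorem 1 of the paper:
for three distinct points `a, b, c` on the unit sphere in `ℝ³`, the
angle `∠ a b c` is at least `‖a - c‖ / 2`. -/
theorem angle_on_unit_sphere_ge
    (a b c : EuclideanSpace ℝ (Fin 3))
    (hab : a ≠ b) (hac : a ≠ c) (hbc : b ≠ c)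
    (ha : ‖a‖ = 1) (hb : ‖b‖ = 1) (hc : ‖c‖ = 1) :
    ‖a - c‖ / 2 ≤ angle (a - b) (c - b) :=
  angle_on_unit_sphere_ge_general a b c hab hbc ha hb hc
end

section
/- There exists a constant c > 0 such that the following holds. Let V be a finite type, G a simple graph on V, k a natural number with k ≥ 1, and suppose there is a map f : V → Fin (k²) such that f u ≠ f w for all distinct vertices u, w that are at distance at most 2 in G (i.e., u and w are adjacent, or there exists x adjacent to both u and w). Then there exists an injective map p : V → EuclideanSpace ℝ (Fin 3) with ‖p v‖ = 1 for all v, such that for every vertex v and every pair of distinct neighbors u, w of v in G, the angle between p u − p v and p w − p v is at least c/k. -/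
/-!
A point `x` of the unit sphere sees two further points `a`, `b` of the sphere under an angle `θ`
with `sin θ ≥ ‖a - b‖ / 2`: the three points lie on a circle of radius at most `1`, and the law of
sines gives `‖a - b‖ = 2 r sin θ`. It therefore suffices to place the vertices on the sphere so that
any two vertices of different colours are at distance `≥ 1 / (4k)`, since two neighbours of a vertex
have different colours. Identify the `k²` colours with the cells of a `k × k` grid of mesh `1 / (2k)`
in `[0, 1/2]²`, place each vertex in its cell, shifted horizontally by at most half a cell through an
injective map into `[0, 1/2]` (which makes the placement injective), and lift vertically to the
upper hemisphere; the lift does not decrease distances.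
-/

open Real InnerProductGeometry Set Function
open scoped RealInnerProductSpace

section SphereGeometry

variable {E : Type*} [NormedAddCommGroup E] [InnerProductSpace ℝ E]

lemma sq_inner_sub_inner_mul_inner_le {x : E} (hx : ‖x‖ = 1) (a b : E) :
    (⟪a, b⟫ - ⟪a, x⟫ * ⟪b, x⟫) ^ 2 ≤ (‖a‖ ^ 2 - ⟪a, x⟫ ^ 2) * (‖b‖ ^ 2 - ⟪b, x⟫ ^ 2) := by
  have hxx : ⟪x, x⟫ = 1 := by rw [real_inner_self_eq_norm_sq, hx, one_pow]
  -- Cauchy–Schwarz for the components of `a` and `b` orthogonal to `x`.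
  have h := real_inner_mul_inner_self_le (a - ⟪a, x⟫ • x) (b - ⟪b, x⟫ • x)
  simp only [inner_sub_left, inner_sub_right, real_inner_smul_left, real_inner_smul_right, hxx,
    real_inner_comm a x, real_inner_comm b x] at h
  rw [real_inner_self_eq_norm_sq, real_inner_self_eq_norm_sq] at h
  linear_combination h

lemma norm_sub_div_two_le_sin_angle_s8 {a b x : E} (ha : ‖a‖ = 1) (hb : ‖b‖ = 1) (hx : ‖x‖ = 1)
    (hax : a ≠ x) (hbx : b ≠ x) :
    ‖a - b‖ / 2 ≤ sin (angle (a - x) (b - x)) := by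
  have hu : 0 < ‖a - x‖ := norm_pos_iff.mpr (sub_ne_zero.mpr hax)
  have hw : 0 < ‖b - x‖ := norm_pos_iff.mpr (sub_ne_zero.mpr hbx)
  have gram := sq_inner_sub_inner_mul_inner_le hx a b
  refine le_of_mul_le_mul_right ?_ (mul_pos hu hw)
  rw [sin_angle_mul_norm_mul_norm]
  refine Real.le_sqrt_of_sq_le ?_
  -- Once all inner products are expanded, the squared claim is exactly the inequality `gram`.
  simp only [inner_sub_left, inner_sub_right, real_inner_comm a x, real_inner_comm b x,
    real_inner_self_eq_norm_sq, div_pow, mul_pow, norm_sub_sq_real, ha, hb, hx] at gram ⊢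
  linear_combination gram

lemma norm_sub_div_two_le_angle {a b x : E} (ha : ‖a‖ = 1) (hb : ‖b‖ = 1) (hx : ‖x‖ = 1)
    (hax : a ≠ x) (hbx : b ≠ x) :
    ‖a - b‖ / 2 ≤ angle (a - x) (b - x) :=
  (norm_sub_div_two_le_sin_angle_s8 ha hb hx hax hbx).trans (sin_le (angle_nonneg _ _))

end SphereGeometry

noncomputable def sphereLift (x y : ℝ) : EuclideanSpace ℝ (Fin 3) :=
  !₂[x, y, √(1 - x ^ 2 - y ^ 2)]

lemma norm_sphereLift {x y : ℝ} (h : x ^ 2 + y ^ 2 ≤ 1) : ‖sphereLift x y‖ = 1 := by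
  rw [EuclideanSpace.norm_eq, Real.sqrt_eq_one]
  simp [sphereLift, Fin.sum_univ_three, Real.sq_sqrt (by linarith : 0 ≤ 1 - x ^ 2 - y ^ 2)]

lemma abs_sub_fst_le_norm_sphereLift_sub (x y x' y' : ℝ) :
    |x - x'| ≤ ‖sphereLift x y - sphereLift x' y'‖ := by
  simpa [sphereLift] using PiLp.norm_apply_le (sphereLift x y - sphereLift x' y') 0

lemma abs_sub_snd_le_norm_sphereLift_sub (x y x' y' : ℝ) :
    |y - y'| ≤ ‖sphereLift x y - sphereLift x' y'‖ := by
  simpa [sphereLift] using PiLp.norm_apply_le (sphereLift x y - sphereLift x' y') 1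

noncomputable def gridCoord (k : ℕ) (m : Fin k) (s : ℝ) : ℝ := (m + s) / (2 * k)

section Grid

variable {k : ℕ}

lemma gridCoord_mem_Icc (m : Fin k) {s : ℝ} (hs : s ∈ Icc (0 : ℝ) (1 / 2)) :
    gridCoord k m s ∈ Icc (0 : ℝ) (1 / 2) := by
  have hk : (0 : ℝ) < k := by exact_mod_cast m.pos
  have hm : (m : ℝ) + 1 ≤ k := by exact_mod_cast m.isLt
  constructor
  · exact div_nonneg (by linarith [hs.1, m.val.cast_nonneg (α := ℝ)]) (by positivity)
  · rw [gridCoord, div_le_iff₀ (by positivity)]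
    linarith [hs.2]

lemma gridCoord_injective (m : Fin k) : Injective (gridCoord k m) := by
  have hk : (2 * k : ℝ) ≠ 0 := by have := m.pos; positivity
  intro s t h
  simpa [gridCoord, div_left_inj' hk] using h

lemma one_div_four_mul_le_abs_gridCoord_sub {m n : Fin k} (hmn : m ≠ n) {s t : ℝ}
    (hs : s ∈ Icc (0 : ℝ) (1 / 2)) (ht : t ∈ Icc (0 : ℝ) (1 / 2)) :
    1 / (4 * k) ≤ |gridCoord k m s - gridCoord k n t| := by
  have hcells : 1 ≤ |(m : ℝ) - n| := by
    rcases Fin.val_ne_of_ne hmn |>.lt_or_gt with h | h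
    · have : (m : ℝ) + 1 ≤ n := by exact_mod_cast h
      rw [abs_sub_comm]; exact le_abs.mpr (Or.inl (by linarith))
    · have : (n : ℝ) + 1 ≤ m := by exact_mod_cast h
      exact le_abs.mpr (Or.inl (by linarith))
  have hoffsets : |s - t| ≤ 1 / 2 :=
    abs_sub_le_iff.mpr ⟨by linarith [hs.2, ht.1], by linarith [ht.2, hs.1]⟩
  have hsep : 1 / 2 ≤ |(m + s) - (n + t)| := by
    rw [add_sub_add_comm]
    linarith [abs_sub_abs_le_abs_add ((m : ℝ) - n) (s - t)]
  rw [gridCoord, gridCoord, ← sub_div, abs_div, abs_of_nonneg (by positivity : (0 : ℝ) ≤ 2 * k)]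
  calc 1 / (4 * k : ℝ) = 1 / 2 / (2 * k) := by ring
    _ ≤ _ := by gcongr

noncomputable def gridPoint (k : ℕ) (c : Fin k × Fin k) (t : ℝ) : EuclideanSpace ℝ (Fin 3) :=
  sphereLift (gridCoord k c.1 t) (gridCoord k c.2 0)

lemma norm_gridPoint (c : Fin k × Fin k) {t : ℝ} (ht : t ∈ Icc (0 : ℝ) (1 / 2)) :
    ‖gridPoint k c t‖ = 1 := by
  have hx := gridCoord_mem_Icc c.1 ht
  have hy := gridCoord_mem_Icc c.2 (by norm_num : (0 : ℝ) ∈ Icc (0 : ℝ) (1 / 2))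
  exact norm_sphereLift (by nlinarith [hx.1, hx.2, hy.1, hy.2])

lemma one_div_four_mul_le_norm_gridPoint_sub {c c' : Fin k × Fin k} (hcc : c ≠ c') {t t' : ℝ}
    (ht : t ∈ Icc (0 : ℝ) (1 / 2)) (ht' : t' ∈ Icc (0 : ℝ) (1 / 2)) :
    1 / (4 * k) ≤ ‖gridPoint k c t - gridPoint k c' t'‖ := by
  have h0 : (0 : ℝ) ∈ Icc (0 : ℝ) (1 / 2) := by norm_num
  by_cases h1 : c.1 = c'.1
  · have h2 : c.2 ≠ c'.2 := fun h2 => hcc (Prod.ext h1 h2)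
    exact (one_div_four_mul_le_abs_gridCoord_sub h2 h0 h0).trans
      (abs_sub_snd_le_norm_sphereLift_sub _ _ _ _)
  · exact (one_div_four_mul_le_abs_gridCoord_sub h1 ht ht').trans
      (abs_sub_fst_le_norm_sphereLift_sub _ _ _ _)

end Grid

theorem exists_injective_sphere_map_separating {V : Type*} [Finite V] {k : ℕ}
    (c : V → Fin k × Fin k) :
    ∃ p : V → EuclideanSpace ℝ (Fin 3), Injective p ∧ (∀ v, ‖p v‖ = 1) ∧
      ∀ u w, c u ≠ c w → 1 / (4 * k) ≤ ‖p u - p w‖ := by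
  have : Infinite (Icc (0 : ℝ) (1 / 2)) := Icc.infinite (by norm_num)
  let t : V ↪ Icc (0 : ℝ) (1 / 2) :=
    (Finite.equivFin V).toEmbedding.trans (Fin.valEmbedding.trans (Infinite.natEmbedding _))
  have hsep u w (h : c u ≠ c w) :
      1 / (4 * k) ≤ ‖gridPoint k (c u) (t u) - gridPoint k (c w) (t w)‖ :=
    one_div_four_mul_le_norm_gridPoint_sub h (t u).2 (t w).2
  refine ⟨fun v => gridPoint k (c v) (t v), ?_, fun v => norm_gridPoint _ (t v).2, hsep⟩
  intro u w huw
  have hk : (0 : ℝ) < 1 / (4 * k) := by have := (c u).1.pos; positivity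
  have hc : c u = c w := by
    by_contra h
    have := hsep u w h
    simp only [huw, sub_self, norm_zero] at this
    linarith
  have hx : gridCoord k (c w).1 (t u) = gridCoord k (c w).1 (t w) := by
    simpa [gridPoint, sphereLift, hc] using congrArg (fun q : EuclideanSpace ℝ (Fin 3) => q 0) huw
  exact t.injective (Subtype.ext (gridCoord_injective _ hx))

/-- The core of the proof of Theorem 1 of the paper and its corollary:
a proper coloring of the square of `G` with `k²` colors yields a 3D
straight-line drawing of `G` with all vertices on the unit sphere and
angular resolution at least `c / k`, for an absolute constant `c > 0`. -/
theorem exists_sphere_drawing_of_square_coloring :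
    ∃ c : ℝ, 0 < c ∧
      ∀ (V : Type) [Fintype V] (G : SimpleGraph V) (k : ℕ), 1 ≤ k →
        ∀ f : V → Fin (k ^ 2),
          (∀ u w : V, u ≠ w →
              (G.Adj u w ∨ ∃ x, G.Adj u x ∧ G.Adj x w) → f u ≠ f w) →
          ∃ p : V → EuclideanSpace ℝ (Fin 3),
            Function.Injective p ∧
            (∀ v, ‖p v‖ = 1) ∧
            ∀ v u w : V, G.Adj v u → G.Adj v w → u ≠ w →
              c / k ≤ angle (p u - p v) (p w - p v) := by
  refine ⟨1 / 8, by norm_num, fun V _ G k _ f hf => ?_⟩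
  let grid : Fin (k ^ 2) ≃ Fin k × Fin k := (finCongr (sq k)).trans finProdFinEquiv.symm
  obtain ⟨p, hp_inj, hp_norm, hp_sep⟩ := exists_injective_sphere_map_separating (grid ∘ f)
  refine ⟨p, hp_inj, hp_norm, fun v u w hvu hvw huw => ?_⟩
  have hfuw : f u ≠ f w := hf u w huw (Or.inr ⟨v, hvu.symm, hvw⟩)
  calc (1 / 8 : ℝ) / k = 1 / (4 * k) / 2 := by ring
    _ ≤ ‖p u - p w‖ / 2 := by gcongr; exact hp_sep u w (grid.injective.ne hfuw)
    _ ≤ angle (p u - p v) (p w - p v) :=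
      norm_sub_div_two_le_angle (hp_norm u) (hp_norm w) (hp_norm v)
        (hp_inj.ne (G.ne_of_adj hvu).symm) (hp_inj.ne (G.ne_of_adj hvw).symm)
end

section
/- Let V be a finite type, G a simple graph on V with maximum degree at most d, and L an even natural number with L ≥ 2. Suppose that for each vertex v we are given an injective map σ_v from the incidence set of v (the edges of G containing v) to ZMod (deg v), where deg v is the degree of v (this encodes a cyclic order of the edges around each vertex). Then there exists a coloring C of the edges of G with at most min(d, 2L) + 1 colors such that: for every vertex v and every pair of distinct edges e, f incident to v, if the cyclic distance between σ_v e and σ_v f in ZMod (deg v) — that is, min((σ_v e − σ_v f).val, (σ_v f − σ_v e).val) — is at most L/2, then C e ≠ C f. -/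
/-!
If `2L ≤ d`, colour greedily: around each endpoint an edge is within cyclic distance `L / 2` of at
most `L` other edges, so it conflicts with at most `2L` edges. Otherwise `d + 1` colours suffice by
Vizing's theorem, a proper edge colouring being in particular localized.

Vizing's theorem is proved as by Misra and Gries: an uncoloured edge `x y₀` is coloured after
rotating a maximal fan `y₀, …, y` at `x`, where the colour of `x yᵢ₊₁` is missing at `yᵢ`. If the
colour `b` missing at `y` is used at `x`, on the edge `x z` following `w` in the fan, and `a` is
missing at `x`, one first swaps the `a`/`b`-Kempe chain through `w` or through `y`, whichever does
not contain `x`.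
-/

open Finset Function

namespace SimpleGraph

section Components

variable {W : Type*} [Fintype W] {H : SimpleGraph W} [DecidableRel H.Adj]

lemma Connected.card_filter_degree_le_one_le_two (hH : H.Connected)
    (hdeg : ∀ v, H.degree v ≤ 2) : #{v | H.degree v ≤ 1} ≤ 2 := by
  have hsum : ∑ v, H.degree v + #{v | H.degree v ≤ 1} ≤ 2 * Fintype.card W := by
    rw [card_filter, ← sum_add_distrib, Fintype.card, mul_comm, ← smul_eq_mul, ← sum_const]
    refine sum_le_sum fun v _ => ?_
    have := hdeg v
    split_ifs <;> omega
  have hedges := hH.card_vert_le_card_edgeSet_add_one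
  rw [Nat.card_eq_fintype_card, Nat.card_eq_fintype_card, ← edgeFinset_card] at hedges
  have := H.sum_degrees_eq_twice_card_edges
  omega

lemma not_reachable_of_degree_le_one (hdeg : ∀ v, H.degree v ≤ 2) {x w y : W}
    (hxw : x ≠ w) (hxy : x ≠ y) (hwy : w ≠ y)
    (hx : H.degree x ≤ 1) (hw : H.degree w ≤ 1) (hy : H.degree y ≤ 1)
    (hreach : H.Reachable x w) : ¬ H.Reachable x y := by
  classical
  intro hreach'
  set C := H.connectedComponentMk x
  have hdegC (v : C.supp) : (H.induce C.supp).degree v = H.degree v :=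
    degree_induce_of_neighborSet_subset fun u hu => C.mem_supp_of_adj_mem_supp v.2 hu
  have hx' : x ∈ C.supp := rfl
  have hw' : w ∈ C.supp := (ConnectedComponent.eq.mpr hreach).symm
  have hy' : y ∈ C.supp := (ConnectedComponent.eq.mpr hreach').symm
  have hsub : ({⟨x, hx'⟩, ⟨w, hw'⟩, ⟨y, hy'⟩} : Finset C.supp) ⊆
      ({v | (H.induce C.supp).degree v ≤ 1} : Finset _) := by
    intro v hv
    simp only [mem_insert, mem_singleton] at hv
    rcases hv with rfl | rfl | rfl <;> simpa [hdegC]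
  have hcard := (card_le_card hsub).trans <|
    Connected.card_filter_degree_le_one_le_two (H := H.induce C.supp) C.connected_toSimpleGraph
      fun v => (hdegC v).trans_le (hdeg v)
  rw [card_insert_of_notMem (by simp [hxw, hxy]), card_pair (by simpa using hwy)] at hcard
  omega

end Components

section PartialEdgeColoring

variable {V α : Type*} {G : SimpleGraph V} {c : Sym2 V → Option α}

/-- `c e = none` means that `e` is not coloured yet. -/
structure IsPartialEdgeColoring (G : SimpleGraph V) (c : Sym2 V → Option α) : Prop where
  mem_edgeSet {e : Sym2 V} {k : α} : c e = some k → e ∈ G.edgeSet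
  eq_of_mem {v : V} {e f : Sym2 V} {k : α} : v ∈ e → v ∈ f → c e = some k → c f = some k → e = f

def coloredEdges (c : Sym2 V → Option α) : Set (Sym2 V) := {e | (c e).isSome}

def IsMissing (c : Sym2 V → Option α) (v : V) (k : α) : Prop := ∀ e, v ∈ e → c e ≠ some k

lemma isPartialEdgeColoring_none : IsPartialEdgeColoring G fun _ => (none : Option α) where
  mem_edgeSet h := nomatch h
  eq_of_mem _ _ h := nomatch h

lemma IsPartialEdgeColoring.exists_isMissing [Fintype V] [DecidableRel G.Adj] [Fintype α]
    (hc : IsPartialEdgeColoring G c) {v : V} (hv : G.degree v < Fintype.card α) :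
    ∃ k, IsMissing c v k := by
  classical
  by_contra! h
  choose f hvf hf using fun k => by simpa [IsMissing] using h k
  have hinj : Set.InjOn f (univ : Finset α) := fun k _ j _ hkj => by
    simpa [hkj, hf j] using (hf k).symm
  have := card_le_card_of_injOn f (fun k _ => (G.mem_incidenceFinset v (f k)).mpr
    ⟨hc.mem_edgeSet (hf k), hvf k⟩) hinj
  rw [card_univ, card_incidenceFinset_eq_degree] at this
  omega

variable [DecidableEq V]

lemma IsPartialEdgeColoring.update_none (hc : IsPartialEdgeColoring G c) (e₀ : Sym2 V) :
    IsPartialEdgeColoring G (update c e₀ none) where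
  mem_edgeSet {e k} h := by
    rcases eq_or_ne e e₀ with rfl | hne
    · simp at h
    · exact hc.mem_edgeSet (by rwa [update_of_ne hne] at h)
  eq_of_mem {v e f k} hve hvf he hf := by
    rcases eq_or_ne e e₀ with rfl | hne
    · simp at he
    rcases eq_or_ne f e₀ with rfl | hnf
    · simp at hf
    rw [update_of_ne hne] at he
    rw [update_of_ne hnf] at hf
    exact hc.eq_of_mem hve hvf he hf

lemma IsPartialEdgeColoring.update_some (hc : IsPartialEdgeColoring G c) {x y : V} {k : α}
    (hxy : G.Adj x y) (hx : IsMissing c x k) (hy : IsMissing c y k) :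
    IsPartialEdgeColoring G (update c s(x, y) (some k)) where
  mem_edgeSet {e j} h := by
    rcases eq_or_ne e s(x, y) with rfl | hne
    · exact hxy
    · exact hc.mem_edgeSet (by rwa [update_of_ne hne] at h)
  eq_of_mem {v e f j} hve hvf he hf := by
    have missing {e' : Sym2 V} (hv : v ∈ s(x, y)) (he' : v ∈ e') : c e' ≠ some k := by
      rcases Sym2.mem_iff.mp hv with rfl | rfl
      exacts [hx e' he', hy e' he']
    rcases eq_or_ne e s(x, y) with rfl | hne <;> rcases eq_or_ne f s(x, y) with rfl | hnf
    · rfl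
    · rw [update_self, Option.some_inj] at he
      rw [update_of_ne hnf, ← he] at hf
      exact absurd hf (missing hve hvf)
    · rw [update_self, Option.some_inj] at hf
      rw [update_of_ne hne, ← hf] at he
      exact absurd he (missing hvf hve)
    · rw [update_of_ne hne] at he
      rw [update_of_ne hnf] at hf
      exact hc.eq_of_mem hve hvf he hf

lemma IsMissing.update_none {v : V} {k : α} (h : IsMissing c v k) (e₀ : Sym2 V) :
    IsMissing (update c e₀ none) v k := fun e hve => by
  rcases eq_or_ne e e₀ with rfl | hne
  · simp
  · rw [update_of_ne hne]; exact h e hve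

lemma IsMissing.update_some {v : V} {k j : α} {e₀ : Sym2 V} (h : IsMissing c v k)
    (hv : v ∈ e₀ → j ≠ k) : IsMissing (update c e₀ (some j)) v k := fun e hve => by
  rcases eq_or_ne e e₀ with rfl | hne
  · simpa using hv hve
  · rw [update_of_ne hne]; exact h e hve

lemma IsPartialEdgeColoring.isMissing_update_none (hc : IsPartialEdgeColoring G c) {v : V}
    {k : α} {e₀ : Sym2 V} (he₀ : c e₀ = some k) (hv : v ∈ e₀) :
    IsMissing (update c e₀ none) v k := fun e hve he => by
  rcases eq_or_ne e e₀ with rfl | hne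
  · simp at he
  · rw [update_of_ne hne] at he
    exact hne (hc.eq_of_mem hve hv he he₀)

end PartialEdgeColoring

section Kempe

variable {V α : Type*} {G : SimpleGraph V} {c : Sym2 V → Option α} {a b k : α} {u v : V}
  {e f : Sym2 V}

def kempeGraph (c : Sym2 V → Option α) (a b : α) : SimpleGraph V :=
  fromEdgeSet {e | c e = some a ∨ c e = some b}

lemma reachable_kempeGraph_of_mem (he : c e = some a ∨ c e = some b) {w : V} (hv : v ∈ e)
    (hw : w ∈ e) (h : (kempeGraph c a b).Reachable u v) : (kempeGraph c a b).Reachable u w := by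
  rcases eq_or_ne v w with rfl | hvw
  · exact h
  obtain rfl := (Sym2.mem_and_mem_iff hvw).mp ⟨hv, hw⟩
  exact h.trans (Adj.reachable ((fromEdgeSet_adj _).mpr ⟨he, hvw⟩))

variable [DecidableEq α]

open Classical in
/-- The transposition fixes every colour other than `a` and `b`, so only the edges of the
`a`/`b`-chain through `u` are recoloured. -/
noncomputable def kempeSwap (c : Sym2 V → Option α) (a b : α) (u : V) : Sym2 V → Option α :=
  fun e => if ∀ v ∈ e, (kempeGraph c a b).Reachable u v then (c e).map (Equiv.swap a b) else c e

lemma kempeSwap_apply_of_not_reachable (hv : v ∈ e) (h : ¬ (kempeGraph c a b).Reachable u v) :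
    kempeSwap c a b u e = c e := by
  rw [kempeSwap, if_neg fun h' => h (h' v hv)]

lemma isSome_kempeSwap (e : Sym2 V) : (kempeSwap c a b u e).isSome = (c e).isSome := by
  unfold kempeSwap
  split_ifs <;> simp

lemma coloredEdges_kempeSwap : coloredEdges (kempeSwap c a b u) = coloredEdges c := by
  simp [coloredEdges, isSome_kempeSwap]

lemma kempeSwap_apply_eq_some (hall : ∀ v ∈ e, (kempeGraph c a b).Reachable u v)
    (h : kempeSwap c a b u e = some k) : c e = some (Equiv.swap a b k) := by
  rw [kempeSwap, if_pos hall, Option.map_eq_some_iff] at h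
  obtain ⟨j, hj, rfl⟩ := h
  rwa [Equiv.swap_apply_self]

lemma eq_some_of_kempeSwap_apply_eq_some (ha : k ≠ a) (hb : k ≠ b)
    (h : kempeSwap c a b u e = some k) : c e = some k := by
  by_cases hall : ∀ v ∈ e, (kempeGraph c a b).Reachable u v
  · rw [kempeSwap_apply_eq_some hall h, Equiv.swap_apply_of_ne_of_ne ha hb]
  · rwa [kempeSwap, if_neg hall] at h

lemma IsPartialEdgeColoring.kempeSwap (hc : IsPartialEdgeColoring G c) :
    IsPartialEdgeColoring G (kempeSwap c a b u) where
  mem_edgeSet {e k} h := by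
    have : (c e).isSome := by rw [← isSome_kempeSwap (a := a) (b := b) (u := u), h]; rfl
    obtain ⟨j, hj⟩ := Option.isSome_iff_exists.mp this
    exact hc.mem_edgeSet hj
  eq_of_mem {v e f k} hve hvf he hf := by
    let P (e : Sym2 V) := ∀ v ∈ e, (kempeGraph c a b).Reachable u v
    have mixed {e₁ e₂ : Sym2 V} (hP₁ : P e₁) (hP₂ : ¬ P e₂) (hv₁ : v ∈ e₁) (hv₂ : v ∈ e₂)
        (h₁ : SimpleGraph.kempeSwap c a b u e₁ = some k)
        (h₂ : SimpleGraph.kempeSwap c a b u e₂ = some k) : c e₁ = some k ∧ c e₂ = some k := by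
      rw [SimpleGraph.kempeSwap, if_neg hP₂] at h₂
      -- an `a`/`b`-edge at the reachable vertex `v` lies entirely in the component
      have hk : k ≠ a ∧ k ≠ b := by
        constructor <;> rintro rfl
        exacts [hP₂ fun w hw => reachable_kempeGraph_of_mem (.inl h₂) hv₂ hw (hP₁ v hv₁),
          hP₂ fun w hw => reachable_kempeGraph_of_mem (.inr h₂) hv₂ hw (hP₁ v hv₁)]
      exact ⟨eq_some_of_kempeSwap_apply_eq_some hk.1 hk.2 h₁, h₂⟩
    by_cases hPe : P e <;> by_cases hPf : P f
    · exact hc.eq_of_mem hve hvf (kempeSwap_apply_eq_some hPe he) (kempeSwap_apply_eq_some hPf hf)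
    · exact hc.eq_of_mem hve hvf (mixed hPe hPf hve hvf he hf).1 (mixed hPe hPf hve hvf he hf).2
    · exact hc.eq_of_mem hve hvf (mixed hPf hPe hvf hve hf he).2 (mixed hPf hPe hvf hve hf he).1
    · rw [SimpleGraph.kempeSwap, if_neg hPe] at he
      rw [SimpleGraph.kempeSwap, if_neg hPf] at hf
      exact hc.eq_of_mem hve hvf he hf

lemma IsMissing.kempeSwap_of_ne (h : IsMissing c v k) (ha : k ≠ a) (hb : k ≠ b) :
    IsMissing (kempeSwap c a b u) v k :=
  fun e hve he => h e hve (eq_some_of_kempeSwap_apply_eq_some ha hb he)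

lemma IsMissing.kempeSwap_of_not_reachable (h : IsMissing c v k)
    (hv : ¬ (kempeGraph c a b).Reachable u v) : IsMissing (kempeSwap c a b u) v k :=
  fun e hve => by rw [kempeSwap_apply_of_not_reachable hve hv]; exact h e hve

lemma IsMissing.kempeSwap_self (h : IsMissing c u b) : IsMissing (kempeSwap c a b u) u a := by
  intro e hue he
  by_cases hall : ∀ v ∈ e, (kempeGraph c a b).Reachable u v
  · exact h e hue (by simpa using kempeSwap_apply_eq_some hall he)
  · rw [kempeSwap, if_neg hall] at he
    obtain ⟨w, hwe, hw⟩ := not_forall₂.mp hall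
    exact hw (reachable_kempeGraph_of_mem (.inl he) hue hwe .rfl)

variable [Fintype V]

lemma IsPartialEdgeColoring.card_filter_eq_some_le_one
    (hc : IsPartialEdgeColoring G c) (v : V) (k : α) : #{w | c s(v, w) = some k} ≤ 1 :=
  card_le_one.mpr fun w hw w' hw' => Sym2.congr_right.mp <|
    hc.eq_of_mem (Sym2.mem_mk_left v w) (Sym2.mem_mk_left v w') (mem_filter.mp hw).2
      (mem_filter.mp hw').2

variable [DecidableEq V] [DecidableRel (kempeGraph c a b).Adj]

lemma degree_kempeGraph_le (v : V) :
    (kempeGraph c a b).degree v ≤ #{w | c s(v, w) = some a} + #{w | c s(v, w) = some b} := by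
  rw [← card_neighborFinset_eq_degree]
  refine (card_le_card fun w hw => ?_).trans (card_union_le _ _)
  have hw' : (kempeGraph c a b).Adj v w := (mem_neighborFinset _ _ _).mp hw
  rw [kempeGraph, fromEdgeSet_adj] at hw'
  simpa [mem_union] using hw'.1

lemma IsPartialEdgeColoring.degree_kempeGraph_le_two
    (hc : IsPartialEdgeColoring G c) (v : V) : (kempeGraph c a b).degree v ≤ 2 :=
  (degree_kempeGraph_le v).trans <|
    add_le_add (hc.card_filter_eq_some_le_one v a) (hc.card_filter_eq_some_le_one v b)

lemma IsPartialEdgeColoring.degree_kempeGraph_le_one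
    (hc : IsPartialEdgeColoring G c) (h : IsMissing c v a ∨ IsMissing c v b) :
    (kempeGraph c a b).degree v ≤ 1 := by
  have hempty {k : α} (hk : IsMissing c v k) : #{w | c s(v, w) = some k} = 0 :=
    card_eq_zero.mpr <| filter_eq_empty_iff.mpr fun w _ => hk _ (Sym2.mem_mk_left v w)
  have := degree_kempeGraph_le (c := c) (a := a) (b := b) v
  have := hc.card_filter_eq_some_le_one v a
  have := hc.card_filter_eq_some_le_one v b
  rcases h with h | h <;> rw [hempty h] at * <;> omega

end Kempe

section Fan

variable {V α : Type*} {G : SimpleGraph V} {c : Sym2 V → Option α} {x : V}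

def FanStep (c : Sym2 V → Option α) (x p q : V) : Prop := ∃ k, c s(x, q) = some k ∧ IsMissing c p k

structure IsFan (G : SimpleGraph V) (c : Sym2 V → Option α) (x : V) (l : List V) : Prop where
  nodup : l.Nodup
  adj : ∀ y ∈ l, G.Adj x y
  isChain : l.IsChain (FanStep c x)

lemma IsFan.concat (hc : IsPartialEdgeColoring G c) {y₀ z : V} {ys : List V} {k : α}
    (hfan : IsFan G c x (y₀ :: ys)) (hz : c s(x, z) = some k)
    (hk : IsMissing c (ys.getLastD y₀) k) (hzys : z ∉ y₀ :: ys) :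
    IsFan G c x (y₀ :: ys ++ [z]) := by
  refine ⟨?_, ?_, ?_⟩
  · exact List.nodup_append.mpr ⟨hfan.nodup, List.nodup_singleton z,
      fun p hp q hq => by rintro rfl; exact hzys (List.mem_singleton.mp hq ▸ hp)⟩
  · intro y hy
    rcases List.mem_append.mp hy with hy | hy
    exacts [hfan.adj y hy, List.mem_singleton.mp hy ▸ hc.mem_edgeSet hz]
  · refine hfan.isChain.append (List.isChain_singleton z) ?_
    simp only [List.getLast?_cons, List.head?_cons, Option.mem_some_iff]
    rintro _ rfl _ rfl
    exact ⟨k, hz, List.getLastD_eq_getLast? ▸ hk⟩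

lemma IsPartialEdgeColoring.exists_maximal_isFan [Fintype V] (hc : IsPartialEdgeColoring G c)
    {y₀ : V} (hxy₀ : G.Adj x y₀) :
    ∃ ys, IsFan G c x (y₀ :: ys) ∧
      ∀ z k, c s(x, z) = some k → IsMissing c (ys.getLastD y₀) k → z ∈ y₀ :: ys := by
  by_contra! h
  have hlong (n : ℕ) : ∃ ys, IsFan G c x (y₀ :: ys) ∧ n ≤ ys.length := by
    induction n with
    | zero => exact ⟨[], ⟨List.nodup_singleton _, by simpa using hxy₀, List.isChain_singleton _⟩,
        le_rfl⟩
    | succ n ih =>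
      obtain ⟨ys, hfan, hn⟩ := ih
      obtain ⟨z, k, hz, hk, hzys⟩ := h ys hfan
      exact ⟨ys ++ [z], hfan.concat hc hz hk hzys, by simpa using hn⟩
  obtain ⟨ys, hfan, hn⟩ := hlong (Fintype.card V)
  have := hfan.nodup.length_le_card
  simp only [List.length_cons] at this
  omega

variable [DecidableEq V]

lemma insert_coloredEdges_subset_update (e : Sym2 V) (k : α) :
    insert e (coloredEdges c) ⊆ coloredEdges (update c e (some k)) := by
  rintro f (rfl | hf)
  · simp [coloredEdges]
  · rcases eq_or_ne f e with rfl | hne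
    · simp [coloredEdges]
    · simpa [coloredEdges, update_of_ne hne] using hf

/-- Shifting the colours of the fan down by one position (`x yᵢ` receives the colour of
`x yᵢ₊₁`) moves the uncoloured edge to the end of the fan, where the common missing colour `k`
can be used. -/
theorem IsFan.exists_extend (hc : IsPartialEdgeColoring G c) {y₀ : V} {ys : List V} {k : α}
    (hfan : IsFan G c x (y₀ :: ys)) (h₀ : c s(x, y₀) = none) (hx : IsMissing c x k)
    (hlast : IsMissing c (ys.getLastD y₀) k) :
    ∃ c' : Sym2 V → Option α,
      IsPartialEdgeColoring G c' ∧ insert s(x, y₀) (coloredEdges c) ⊆ coloredEdges c' := by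
  induction ys generalizing y₀ c with
  | nil =>
    exact ⟨_, hc.update_some (hfan.adj y₀ (by simp)) hx hlast,
      insert_coloredEdges_subset_update _ _⟩
  | cons y₁ ys ih =>
    obtain ⟨k₁, h₁, hk₁⟩ := (List.isChain_cons_cons.mp hfan.isChain).1
    have hy₀ : y₀ ∉ y₁ :: ys := (List.nodup_cons.mp hfan.nodup).1
    have hxy₀ : G.Adj x y₀ := hfan.adj y₀ (by simp)
    have hne {q : V} (hq : q ∈ y₁ :: ys) : s(x, q) ≠ s(x, y₀) :=
      fun h => hy₀ (Sym2.congr_right.mp h ▸ hq)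
    set c₁ := update (update c s(x, y₁) none) s(x, y₀) (some k₁) with hc₁def
    have hc₁ : IsPartialEdgeColoring G c₁ := (hc.update_none _).update_some hxy₀
      (hc.isMissing_update_none h₁ (Sym2.mem_mk_left _ _)) (hk₁.update_none _)
    have hmissing {z : V} {j : α} (hz : z ≠ y₀) (h : IsMissing c z j) : IsMissing c₁ z j := by
      refine (h.update_none _).update_some fun hzx => ?_
      obtain rfl : z = x := by simpa [hz] using hzx
      exact fun hj => h _ (Sym2.mem_mk_left _ _) (hj ▸ h₁)
    have hfan₁ : IsFan G c₁ x (y₁ :: ys) := by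
      refine ⟨hfan.nodup.of_cons, fun y hy => hfan.adj y (List.mem_cons_of_mem _ hy),
        hfan.isChain.tail.imp_of_mem_tail_imp fun p q hp hq ⟨j, hj, hpj⟩ => ⟨j, ?_, ?_⟩⟩
      · have hqy₁ : s(x, q) ≠ s(x, y₁) := fun h =>
          (List.nodup_cons.mp hfan.nodup.of_cons).1 (Sym2.congr_right.mp h ▸ hq)
        rwa [hc₁def, update_of_ne (hne (List.mem_cons_of_mem _ hq)), update_of_ne hqy₁]
      · exact hmissing (fun h => hy₀ (h ▸ hp)) hpj
    obtain ⟨c', hc', hsub⟩ := ih hc₁ hfan₁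
      (by rw [hc₁def, update_of_ne (hne (by simp)), update_self]) (hmissing hxy₀.ne hx)
      (hmissing (fun h => hy₀ (h ▸ List.getLastD_mem_cons)) (List.getLastD_cons ▸ hlast))
    refine ⟨c', hc', subset_trans ?_ hsub⟩
    rintro e (rfl | he)
    · exact Or.inr (by simp [c₁, coloredEdges])
    · by_cases he₀ : e = s(x, y₀)
      · exact Or.inr (by simp [he₀, c₁, coloredEdges])
      by_cases he₁ : e = s(x, y₁)
      · exact Or.inl he₁
      · exact Or.inr (by simpa [c₁, coloredEdges, update_of_ne he₀, update_of_ne he₁] using he)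

end Fan

section Vizing

variable {V α : Type*} {G : SimpleGraph V} {c : Sym2 V → Option α} {x y₀ z : V} {a b : α}

lemma IsFan.left_of_append {l l' : List V} (hfan : IsFan G c x (l ++ l')) : IsFan G c x l :=
  ⟨hfan.nodup.of_append_left, fun y hy => hfan.adj y (List.mem_append_left _ hy),
    hfan.isChain.left_of_append⟩

lemma IsFan.fanStep_getLastD {l₁ l₂ : List V} (hfan : IsFan G c x (y₀ :: l₁ ++ z :: l₂)) :
    FanStep c x (l₁.getLastD y₀) z :=
  (List.isChain_append.mp hfan.isChain).2.2 _ (by simp [List.getLast?_cons]) z (by simp)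

lemma IsPartialEdgeColoring.apply_ne_of_ne (hc : IsPartialEdgeColoring G c) {q : V}
    (hxz : c s(x, z) = some b) (hqz : q ≠ z) : c s(x, q) ≠ some b := fun h =>
  hqz (Sym2.congr_right.mp (hc.eq_of_mem (Sym2.mem_mk_left _ _) (Sym2.mem_mk_left _ _) h hxz))

variable [DecidableEq α]

lemma isChain_fanStep_kempeSwap {l : List V} {u : V} (hl : l.IsChain (FanStep c x))
    (hax : IsMissing c x a) (hb : ∀ q ∈ l.tail, c s(x, q) ≠ some b)
    (hux : ¬ (kempeGraph c a b).Reachable u x) : l.IsChain (FanStep (kempeSwap c a b u) x) :=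
  hl.imp_of_mem_tail_imp fun p q _ hq ⟨k, hk, hpk⟩ => by
    have hka : k ≠ a := fun h => hax _ (Sym2.mem_mk_left _ _) (h ▸ hk)
    have hkb : k ≠ b := fun h => hb q hq (h ▸ hk)
    exact ⟨k, by rwa [kempeSwap_apply_of_not_reachable (Sym2.mem_mk_left _ _) hux],
      hpk.kempeSwap_of_ne hka hkb⟩

variable [DecidableEq V]

lemma exists_extend_of_isFan_kempeSwap (hc : IsPartialEdgeColoring G c) {l : List V}
    (hfan : IsFan G (kempeSwap c a b (l.getLastD y₀)) x (y₀ :: l)) (h₀ : c s(x, y₀) = none)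
    (hax : IsMissing c x a) (hbu : IsMissing c (l.getLastD y₀) b)
    (hux : ¬ (kempeGraph c a b).Reachable (l.getLastD y₀) x) :
    ∃ c' : Sym2 V → Option α,
      IsPartialEdgeColoring G c' ∧ insert s(x, y₀) (coloredEdges c) ⊆ coloredEdges c' := by
  have := hfan.exists_extend hc.kempeSwap
    ((kempeSwap_apply_of_not_reachable (Sym2.mem_mk_left _ _) hux).trans h₀)
    (hax.kempeSwap_of_not_reachable hux) hbu.kempeSwap_self
  rwa [coloredEdges_kempeSwap] at this

lemma exists_extend_of_isFan_of_not_reachable (hc : IsPartialEdgeColoring G c) {l : List V}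
    (hfan : IsFan G c x (y₀ :: l)) (h₀ : c s(x, y₀) = none) (hax : IsMissing c x a)
    (hbu : IsMissing c (l.getLastD y₀) b) (hb : ∀ q ∈ l, c s(x, q) ≠ some b)
    (hxu : ¬ (kempeGraph c a b).Reachable x (l.getLastD y₀)) :
    ∃ c' : Sym2 V → Option α,
      IsPartialEdgeColoring G c' ∧ insert s(x, y₀) (coloredEdges c) ⊆ coloredEdges c' :=
  exists_extend_of_isFan_kempeSwap hc
    ⟨hfan.nodup, hfan.adj, isChain_fanStep_kempeSwap hfan.isChain hax hb fun h => hxu h.symm⟩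
    h₀ hax hbu fun h => hxu h.symm

/-- The `a`/`b`-chain through `x` is a path with `x` as an end, so it cannot reach both `w` and
`y`; swapping at `y` leaves the whole fan intact. -/
lemma exists_extend_of_isFan_of_reachable [Fintype V] (hc : IsPartialEdgeColoring G c)
    {l₁ l₂ : List V} (hfan : IsFan G c x (y₀ :: l₁ ++ z :: l₂)) (h₀ : c s(x, y₀) = none)
    (hxz : c s(x, z) = some b) (hax : IsMissing c x a) (hbw : IsMissing c (l₁.getLastD y₀) b)
    (hby : IsMissing c (l₂.getLastD z) b)
    (hreach : (kempeGraph c a b).Reachable x (l₁.getLastD y₀)) :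
    ∃ c' : Sym2 V → Option α,
      IsPartialEdgeColoring G c' ∧ insert s(x, y₀) (coloredEdges c) ⊆ coloredEdges c' := by
  classical
  set w := l₁.getLastD y₀
  set y := l₂.getLastD z
  obtain ⟨-, hnd₂, hdisj⟩ := List.nodup_append.mp hfan.nodup
  have hw : w ∈ y₀ :: l₁ := List.getLastD_mem_cons
  have hy : y ∈ z :: l₂ := List.getLastD_mem_cons
  have hxy : ¬ (kempeGraph c a b).Reachable x y :=
    not_reachable_of_degree_le_one hc.degree_kempeGraph_le_two
      (hfan.adj w (List.mem_append_left _ hw)).ne (hfan.adj y (List.mem_append_right _ hy)).ne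
      (hdisj w hw y hy) (hc.degree_kempeGraph_le_one (.inl hax))
      (hc.degree_kempeGraph_le_one (.inr hbw)) (hc.degree_kempeGraph_le_one (.inr hby)) hreach
  have hyx : ¬ (kempeGraph c a b).Reachable y x := fun h => hxy h.symm
  have hlast : (l₁ ++ z :: l₂).getLastD y₀ = y := by simp [List.getLast?_cons, y]
  have hchain := List.isChain_append.mp hfan.isChain
  refine exists_extend_of_isFan_kempeSwap hc (l := l₁ ++ z :: l₂) ⟨hfan.nodup, hfan.adj, ?_⟩ h₀
    hax (hlast ▸ hby) (hlast ▸ hyx)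
  rw [hlast]
  refine (isChain_fanStep_kempeSwap hchain.1 hax (fun q hq => ?_) hyx).append
    (isChain_fanStep_kempeSwap hchain.2.1 hax (fun q hq => ?_) hyx) ?_
  · exact hc.apply_ne_of_ne hxz (hdisj q (List.mem_cons_of_mem _ hq) z List.mem_cons_self)
  · exact hc.apply_ne_of_ne hxz fun h => (List.nodup_cons.mp hnd₂).1 (h ▸ hq)
  · rw [show (y₀ :: l₁).getLast? = some w by simp [List.getLast?_cons, w]]
    simp only [List.head?_cons, Option.mem_some_iff]
    rintro _ rfl _ rfl
    exact ⟨b, by rwa [kempeSwap_apply_of_not_reachable (Sym2.mem_mk_left _ _) hyx],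
      hbw.kempeSwap_of_not_reachable fun h => hxy (hreach.trans h.symm)⟩

variable [Fintype V] [DecidableRel G.Adj] [Fintype α]

theorem IsPartialEdgeColoring.exists_extend (hdeg : ∀ v, G.degree v < Fintype.card α)
    (hc : IsPartialEdgeColoring G c) (hxy₀ : G.Adj x y₀) :
    ∃ c' : Sym2 V → Option α,
      IsPartialEdgeColoring G c' ∧ insert s(x, y₀) (coloredEdges c) ⊆ coloredEdges c' := by
  by_cases h₀ : c s(x, y₀) = none
  swap
  · exact ⟨c, hc, Set.insert_subset_iff.mpr ⟨Option.ne_none_iff_isSome.mp h₀, subset_rfl⟩⟩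
  obtain ⟨ys, hfan, hmax⟩ := hc.exists_maximal_isFan hxy₀
  obtain ⟨b, hby⟩ := hc.exists_isMissing (hdeg (ys.getLastD y₀))
  by_cases hbx : IsMissing c x b
  · exact hfan.exists_extend hc h₀ hbx hby
  obtain ⟨z, hxz⟩ : ∃ z, c s(x, z) = some b := by
    obtain ⟨e, hxe, he⟩ : ∃ e, x ∈ e ∧ c e = some b := by simpa [IsMissing] using hbx
    obtain ⟨z, rfl⟩ := Sym2.mem_iff_exists.mp hxe
    exact ⟨z, he⟩
  have hz : z ∈ ys := (List.mem_cons.mp (hmax z b hxz hby)).resolve_left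
    (by rintro rfl; simp [h₀] at hxz)
  obtain ⟨l₁, l₂, rfl⟩ := List.append_of_mem hz
  have hbw : IsMissing c (l₁.getLastD y₀) b := by
    obtain ⟨k, hk, hwk⟩ := hfan.fanStep_getLastD
    rwa [← Option.some_inj.mp (hk.symm.trans hxz)]
  obtain ⟨a, hax⟩ := hc.exists_isMissing (hdeg x)
  by_cases hreach : (kempeGraph c a b).Reachable x (l₁.getLastD y₀)
  · exact exists_extend_of_isFan_of_reachable hc hfan h₀ hxz hax hbw
      (by simpa [List.getLast?_cons] using hby) hreach
  · exact exists_extend_of_isFan_of_not_reachable hc hfan.left_of_append h₀ hax hbw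
      (fun q hq => hc.apply_ne_of_ne hxz <|
        (List.nodup_append.mp hfan.nodup).2.2 q (List.mem_cons_of_mem _ hq) z List.mem_cons_self)
      hreach

theorem exists_isPartialEdgeColoring_edgeSet_subset (hdeg : ∀ v, G.degree v < Fintype.card α) :
    ∃ c : Sym2 V → Option α, IsPartialEdgeColoring G c ∧ G.edgeSet ⊆ coloredEdges c := by
  refine Set.Finite.induction_on_subset
    (motive := fun s _ => ∃ c : Sym2 V → Option α, IsPartialEdgeColoring G c ∧ s ⊆ coloredEdges c)
    G.edgeSet G.edgeSet.toFinite ⟨_, isPartialEdgeColoring_none, Set.empty_subset _⟩ ?_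
  rintro e s he - - ⟨c, hc, hs⟩
  induction e using Sym2.ind with
  | h x y =>
    obtain ⟨c', hc', hsub⟩ := hc.exists_extend hdeg he
    exact ⟨c', hc', (Set.insert_subset_insert hs).trans hsub⟩

end Vizing

theorem lineGraph_colorable_maxDegree_add_one {V : Type*} [Fintype V] (G : SimpleGraph V)
    [DecidableRel G.Adj] : G.lineGraph.Colorable (G.maxDegree + 1) := by
  classical
  obtain ⟨c, hc, hall⟩ := exists_isPartialEdgeColoring_edgeSet_subset
    (α := Fin (G.maxDegree + 1)) fun v => by simpa [Nat.lt_succ_iff] using G.degree_le_maxDegree v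
  refine ⟨Coloring.mk (fun e => (c e).get (hall e.2)) fun {e f} hef heq => ?_⟩
  obtain ⟨hne, v, hve, hvf⟩ := lineGraph_adj_iff_exists.mp hef
  exact hne (Subtype.ext (hc.eq_of_mem hve hvf (Option.some_get (hall e.2)).symm
    (by rw [heq]; exact (Option.some_get _).symm)))

theorem colorable_of_forall_degree_le {W : Type*} [Fintype W] (H : SimpleGraph W)
    [DecidableRel H.Adj] {m : ℕ} (hdeg : ∀ v, H.degree v ≤ m) : H.Colorable (m + 1) := by
  classical
  suffices ∀ S : Finset W, ∃ C : W → Fin (m + 1), ∀ v ∈ S, ∀ w ∈ S, H.Adj v w → C v ≠ C w by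
    obtain ⟨C, hC⟩ := this univ
    exact ⟨Coloring.mk C fun hvw => hC _ (mem_univ _) _ (mem_univ _) hvw⟩
  intro S
  induction S using Finset.induction_on with
  | empty => exact ⟨0, by simp⟩
  | insert a S _ ih =>
    obtain ⟨C, hC⟩ := ih
    obtain ⟨k, hk⟩ : ∃ k, k ∉ (H.neighborFinset a).image C := by
      by_contra! h
      have := (card_le_card (fun k _ => h k : (univ : Finset (Fin (m + 1))) ⊆ _)).trans
        card_image_le
      rw [card_univ, Fintype.card_fin, card_neighborFinset_eq_degree] at this
      exact absurd (hdeg a) (by omega)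
    have hka {w : W} (hw : H.Adj a w) : update C a k a ≠ update C a k w := by
      rw [update_self, update_of_ne hw.ne.symm]
      exact fun h => hk (mem_image.mpr ⟨w, (mem_neighborFinset _ _ _).mpr hw, h.symm⟩)
    refine ⟨update C a k, fun v hv w hw hvw => ?_⟩
    rcases eq_or_ne v a with rfl | hva
    · exact hka hvw
    rcases eq_or_ne w a with rfl | hwa
    · exact (hka hvw.symm).symm
    rw [update_of_ne hva, update_of_ne hwa]
    exact hC v ((mem_insert.mp hv).resolve_left hva) w ((mem_insert.mp hw).resolve_left hwa) hvw

section Localized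

def cyclicDist {n : ℕ} (s t : ZMod n) : ℕ := min (s - t).val (t - s).val

lemma card_filter_cyclicDist_le {ι : Type*} [Fintype ι] [DecidableEq ι] {n : ℕ} [NeZero n]
    {g : ι → ZMod n} (hg : Injective g) (i : ι) (r : ℕ) :
    #{j | j ≠ i ∧ cyclicDist (g i) (g j) ≤ r} ≤ 2 * r := by
  rw [← card_image_of_injective _ hg, two_mul]
  refine (card_le_card ?_).trans <| (card_union_le ((Icc 1 r).image fun m : ℕ => g i - m)
    ((Icc 1 r).image fun m : ℕ => g i + m)).trans <|
      add_le_add (card_image_le.trans (by simp)) (card_image_le.trans (by simp))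
  intro t ht
  obtain ⟨j, hj, rfl⟩ := mem_image.mp ht
  obtain ⟨hji, hdist⟩ := (mem_filter.mp hj).2
  have hval {s : ZMod n} (hs : s ≠ 0) (hsr : s.val ≤ r) : s.val ∈ Icc 1 r :=
    mem_Icc.mpr ⟨Nat.one_le_iff_ne_zero.mpr ((ZMod.val_ne_zero s).mpr hs), hsr⟩
  rcases min_le_iff.mp hdist with h | h
  · exact mem_union_left _ (mem_image.mpr ⟨_, hval (sub_ne_zero.mpr (hg.ne hji.symm)) h,
      by simp⟩)
  · exact mem_union_right _ (mem_image.mpr ⟨_, hval (sub_ne_zero.mpr (hg.ne hji)) h,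
      by simp⟩)

variable {V : Type*} [Fintype V] {G : SimpleGraph V} [DecidableRel G.Adj]

def localizedConflictGraph (G : SimpleGraph V) [DecidableRel G.Adj]
    (σ : (v : V) → G.incidenceSet v → ZMod (G.degree v)) (r : ℕ) : SimpleGraph G.edgeSet where
  Adj e f := e ≠ f ∧ ∃ v, ∃ (he : v ∈ (e : Sym2 V)) (hf : v ∈ (f : Sym2 V)),
    cyclicDist (σ v ⟨e, e.2, he⟩) (σ v ⟨f, f.2, hf⟩) ≤ r
  symm := ⟨fun _ _ ⟨hne, v, he, hf, h⟩ => ⟨hne.symm, v, hf, he, by rwa [cyclicDist, min_comm]⟩⟩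
  loopless := ⟨fun _ h => h.1 rfl⟩

variable {σ : (v : V) → G.incidenceSet v → ZMod (G.degree v)}

@[simp] lemma localizedConflictGraph_adj {r : ℕ} {e f : G.edgeSet} :
    (G.localizedConflictGraph σ r).Adj e f ↔ e ≠ f ∧ ∃ v, ∃ (he : v ∈ (e : Sym2 V))
      (hf : v ∈ (f : Sym2 V)), cyclicDist (σ v ⟨e, e.2, he⟩) (σ v ⟨f, f.2, hf⟩) ≤ r :=
  Iff.rfl

lemma localizedConflictGraph_le_lineGraph (r : ℕ) : G.localizedConflictGraph σ r ≤ G.lineGraph :=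
  fun _ _ h => by
    obtain ⟨hne, v, he, hf, -⟩ := localizedConflictGraph_adj.mp h
    exact lineGraph_adj_iff_exists.mpr ⟨hne, v, he, hf⟩

lemma degree_localizedConflictGraph_le [DecidableEq V] (hσ : ∀ v, Injective (σ v)) (r : ℕ)
    [DecidableRel (G.localizedConflictGraph σ r).Adj] (e : G.edgeSet) :
    (G.localizedConflictGraph σ r).degree e ≤ 4 * r := by
  obtain ⟨e, he⟩ := e
  induction e using Sym2.ind with
  | h u w =>
    let conflictsAt (v : V) (hv : v ∈ s(u, w)) : Finset G.edgeSet :=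
      ({f | f ≠ ⟨s(u, w), he, hv⟩ ∧ cyclicDist (σ v ⟨s(u, w), he, hv⟩) (σ v f) ≤ r} :
        Finset (G.incidenceSet v)).map ⟨_, Set.inclusion_injective (G.incidenceSet_subset v)⟩
    have hcard (v : V) (hv : v ∈ s(u, w)) : #(conflictsAt v hv) ≤ 2 * r := by
      have : Nonempty (G.incidenceSet v) := ⟨⟨_, he, hv⟩⟩
      have : NeZero (G.degree v) :=
        ⟨by rw [← card_incidenceSet_eq_degree]; exact Fintype.card_ne_zero⟩
      rw [card_map]
      exact card_filter_cyclicDist_le (hσ v) _ r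
    have hsub : (G.localizedConflictGraph σ r).neighborFinset ⟨s(u, w), he⟩ ⊆
        conflictsAt u (Sym2.mem_mk_left u w) ∪ conflictsAt w (Sym2.mem_mk_right u w) := by
      intro f hf
      obtain ⟨hne, v, hv, hvf, hdist⟩ :=
        localizedConflictGraph_adj.mp ((mem_neighborFinset _ _ _).mp hf)
      have hmem : f ∈ conflictsAt v hv :=
        mem_map.mpr ⟨⟨f, f.2, hvf⟩, mem_filter.mpr ⟨mem_univ _,
          fun h => hne (Subtype.ext (congrArg Subtype.val h).symm), hdist⟩, rfl⟩
      rcases Sym2.mem_iff.mp hv with rfl | rfl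
      exacts [mem_union_left _ hmem, mem_union_right _ hmem]
    rw [← card_neighborFinset_eq_degree]
    have := (card_le_card hsub).trans (card_union_le _ _)
    have := hcard u (Sym2.mem_mk_left u w)
    have := hcard w (Sym2.mem_mk_right u w)
    omega

end Localized

end SimpleGraph

theorem exists_localized_edge_coloring_general
    {V : Type*} [Fintype V] (G : SimpleGraph V) [DecidableRel G.Adj]
    (d L : ℕ) (hd : G.maxDegree ≤ d)
    (σ : (v : V) → G.incidenceSet v → ZMod (G.degree v))
    (hσ : ∀ v, Function.Injective (σ v)) :
    ∃ C : Sym2 V → Fin (min d (2 * L) + 1),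
      ∀ (v : V) (e f : G.incidenceSet v), e ≠ f →
        min (σ v e - σ v f).val (σ v f - σ v e).val ≤ L / 2 →
        C (e : Sym2 V) ≠ C (f : Sym2 V) := by
  classical
  obtain ⟨C⟩ : (G.localizedConflictGraph σ (L / 2)).Colorable (min d (2 * L) + 1) := by
    rcases le_total d (2 * L) with h | h
    · exact (G.lineGraph_colorable_maxDegree_add_one.mono (by omega)).mono_left
        (SimpleGraph.localizedConflictGraph_le_lineGraph _)
    · exact SimpleGraph.colorable_of_forall_degree_le _ fun e =>
        (SimpleGraph.degree_localizedConflictGraph_le hσ _ e).trans (by omega)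
  refine ⟨fun e => if he : e ∈ G.edgeSet then C ⟨e, he⟩ else 0, fun v e f hef hdist => ?_⟩
  simp only [dif_pos e.2.1, dif_pos f.2.1]
  exact C.valid <| SimpleGraph.localizedConflictGraph_adj.mpr
    ⟨fun h => hef (Subtype.ext (by simpa using h)), v, e.2.2, f.2.2, hdist⟩

/-- Existence of an `L`-localized edge coloring: given a simple graph `G`
of maximum degree at most `d` together with a rotation system (a cyclic
order, encoded by an injection of the incidence set of each vertex `v`
into `ZMod (deg v)`), and an even `L ≥ 2`, there is an edge coloring with
at most `min d (2L) + 1` colors such that any two distinct edges incident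
to a common vertex whose cyclic distance around that vertex is at most
`L / 2` receive different colors. -/
theorem exists_localized_edge_coloring
    {V : Type*} [Fintype V] (G : SimpleGraph V) [DecidableRel G.Adj]
    (d L : ℕ) (hd : G.maxDegree ≤ d) (hL : 2 ≤ L) (hLeven : Even L)
    (σ : (v : V) → G.incidenceSet v → ZMod (G.degree v))
    (hσ : ∀ v, Function.Injective (σ v)) :
    ∃ C : Sym2 V → Fin (min d (2 * L) + 1),
      ∀ (v : V) (e f : G.incidenceSet v), e ≠ f →
        min (σ v e - σ v f).val (σ v f - σ v e).val ≤ L / 2 →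
        C (e : Sym2 V) ≠ C (f : Sym2 V) :=
  exists_localized_edge_coloring_general G d L hd σ hσ
end

section
/- There exists a constant c > 0 such that the following holds. Let V be a finite type, G a simple graph on V, and d a natural number with 1 ≤ d and the maximum degree of G at most d. Let p : V → EuclideanSpace ℝ (Fin 3) be any injective map with p v 2 = 0 for every v (all vertices lie in the base plane z = 0), and let n denote the unit vector (0,0,1). Then there exists an assignment α : Sym2 V → ℝ with α e ∈ [0, π/4] for every e, such that for every vertex v and every pair of distinct neighbors u, w of v, the vectors T(v,u) = cos(α ⟦(v,u)⟧) • (‖p u − p v‖⁻¹ • (p u − p v)) + sin(α ⟦(v,u)⟧) • n and T(v,w) = cos(α ⟦(v,w)⟧) • (‖p w − p v‖⁻¹ • (p w − p v)) + sin(α ⟦(v,w)⟧) • n form an angle of at least c/d. -/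
/-!
Colour the edges greedily so that edges sharing an endpoint get different colours
`k e ∈ [0, 2d)`; this is possible because the line graph has degree `< 2d`. Draw edge `e`
with angle `arcsin (k e / 4d)`. Every tangent at a vertex is a unit vector whose vertical
component is `k e / 4d`, so two tangents at the same vertex differ by at least `1 / 4d` in
that component; the chord between them, and hence the angle, is at least `1 / 4d`.
-/

open Real InnerProductGeometry

/-- The unit tangent vector at `p v` of the circular arc drawn over the
segment from `p v` to `p u` in the vertical plane through the two
endpoints, making angle `α s(v, u)` with the base plane. -/
noncomputable def arcTangentVec {V : Type*} (p : V → EuclideanSpace ℝ (Fin 3))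
    (α : Sym2 V → ℝ) (nvec : EuclideanSpace ℝ (Fin 3)) (v u : V) :
    EuclideanSpace ℝ (Fin 3) :=
  Real.cos (α s(v, u)) • (‖p u - p v‖⁻¹ • (p u - p v)) +
    Real.sin (α s(v, u)) • nvec

open scoped RealInnerProductSpace

namespace SimpleGraph

variable {V : Type*} (G : SimpleGraph V)

open Finset in
theorem colorable_of_forall_degree_lt [Fintype V] [DecidableRel G.Adj] {n : ℕ}
    (h : ∀ v, G.degree v < n) : G.Colorable n := by
  classical
  rcases n with _ | n
  · have : IsEmpty V := ⟨fun v => Nat.not_lt_zero _ (h v)⟩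
    exact .of_isEmpty 0
  suffices ∀ s : Finset V, ∃ f : V → Fin (n + 1), ∀ a ∈ s, ∀ b ∈ s, G.Adj a b → f a ≠ f b by
    obtain ⟨f, hf⟩ := this univ
    exact ⟨Coloring.mk f fun hab => hf _ (mem_univ _) _ (mem_univ _) hab⟩
  intro s
  induction s using Finset.induction_on with
  | empty => exact ⟨0, by simp⟩
  | insert a s ha ih =>
    obtain ⟨f, hf⟩ := ih
    -- the neighbours of `a` use at most `degree a < n + 1` colours
    obtain ⟨c, -, hc⟩ := exists_mem_notMem_of_card_lt_card (s := (G.neighborFinset a).image f)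
      (t := univ) (by simpa using card_image_le.trans_lt (h a))
    have hfree : ∀ b, G.Adj a b → c ≠ f b := fun b hab hcb =>
      hc (mem_image.mpr ⟨b, (G.mem_neighborFinset a b).mpr hab, hcb.symm⟩)
    have hne : ∀ b ∈ s, b ≠ a := fun b hb hba => ha (hba ▸ hb)
    refine ⟨Function.update f a c, ?_⟩
    simp only [forall_mem_insert, Function.update_self]
    refine ⟨⟨fun hab => (G.ne_of_adj hab rfl).elim, fun b hb hab => ?_⟩,
      fun b hb => ⟨fun hba => ?_, fun b' hb' hbb' => ?_⟩⟩
    · rw [Function.update_of_ne (hne b hb)]; exact hfree b hab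
    · rw [Function.update_of_ne (hne b hb)]; exact (hfree b hba.symm).symm
    · rw [Function.update_of_ne (hne b hb), Function.update_of_ne (hne b' hb')]
      exact hf b hb b' hb' hbb'

open Finset in
theorem lineGraph_degree_lt_two_mul [Fintype V] [DecidableRel G.Adj] {d : ℕ} (hG : G.maxDegree ≤ d)
    (e : G.edgeSet) [Fintype (G.lineGraph.neighborSet e)] : G.lineGraph.degree e < 2 * d := by
  classical
  obtain ⟨e, hab⟩ := e
  induction e with | _ a b =>
  set U := G.incidenceFinset a ∪ G.incidenceFinset b
  have hmem : s(a, b) ∈ U :=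
    mem_union_left _ ((G.mem_incidenceFinset _ _).mpr ⟨hab, Sym2.mem_mk_left a b⟩)
  have hsub : (G.lineGraph.neighborFinset ⟨s(a, b), hab⟩).map (Function.Embedding.subtype _) ⊆
      U.erase s(a, b) := by
    intro f hf
    obtain ⟨⟨f, hfE⟩, hadj, rfl⟩ := mem_map.mp hf
    obtain ⟨hne, v, hv, hvf⟩ := lineGraph_adj_iff_exists.mp ((mem_neighborFinset _ _ _).mp hadj)
    refine mem_erase.mpr ⟨fun h => hne (Subtype.ext h.symm), ?_⟩
    rcases Sym2.mem_iff.mp hv with rfl | rfl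
    · exact mem_union_left _ ((G.mem_incidenceFinset _ _).mpr ⟨hfE, hvf⟩)
    · exact mem_union_right _ ((G.mem_incidenceFinset _ _).mpr ⟨hfE, hvf⟩)
  have hU : #U ≤ 2 * d := calc
    #U ≤ G.degree a + G.degree b := by
      simpa using card_union_le (G.incidenceFinset a) (G.incidenceFinset b)
    _ ≤ 2 * d := by
      have := (G.degree_le_maxDegree a).trans hG
      have := (G.degree_le_maxDegree b).trans hG
      omega
  have := card_le_card hsub
  rw [card_map, card_erase_of_mem hmem] at this
  have := card_pos.mpr ⟨_, hmem⟩
  rw [← card_neighborFinset_eq_degree]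
  omega

theorem exists_edge_coloring_of_maxDegree_le [Fintype V] [DecidableRel G.Adj] {d : ℕ} (hd : 1 ≤ d)
    (hG : G.maxDegree ≤ d) :
    ∃ col : Sym2 V → ℕ, (∀ e, col e < 2 * d) ∧
      ∀ v u w, G.Adj v u → G.Adj v w → u ≠ w → col s(v, u) ≠ col s(v, w) := by
  classical
  obtain ⟨C⟩ :=
    G.lineGraph.colorable_of_forall_degree_lt fun e => G.lineGraph_degree_lt_two_mul hG e
  refine ⟨fun e => if he : e ∈ G.edgeSet then C ⟨e, he⟩ else 0, fun e => ?_,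
    fun v u w hvu hvw huw => ?_⟩
  · dsimp only
    split_ifs
    exacts [Fin.is_lt _, by omega]
  · simp only [dif_pos (G.mem_edgeSet.mpr hvu), dif_pos (G.mem_edgeSet.mpr hvw), ne_eq,
      Fin.val_inj]
    refine C.valid (lineGraph_adj_iff_exists.mpr ⟨fun h => huw ?_, v, Sym2.mem_mk_left _ _,
      Sym2.mem_mk_left _ _⟩)
    exact Sym2.congr_right.mp (congrArg Subtype.val h)

end SimpleGraph

section InnerProductSpace

variable {E : Type*} [NormedAddCommGroup E] [InnerProductSpace ℝ E]

namespace InnerProductGeometry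

theorem norm_sub_le_angle {x y : E} (hx : ‖x‖ = 1) (hy : ‖y‖ = 1) : ‖x - y‖ ≤ angle x y := by
  have hsq : ‖x - y‖ ^ 2 ≤ angle x y ^ 2 := by
    have := norm_sub_sq_eq_norm_sq_add_norm_sq_sub_two_mul_norm_mul_norm_mul_cos_angle x y
    rw [hx, hy] at this
    nlinarith [one_sub_sq_div_two_le_cos (x := angle x y)]
  exact pow_le_pow_iff_left₀ (norm_nonneg _) (angle_nonneg x y) two_ne_zero |>.mp hsq

theorem abs_inner_sub_inner_le_angle {x y n : E} (hx : ‖x‖ = 1) (hy : ‖y‖ = 1) (hn : ‖n‖ = 1) :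
    |⟪x, n⟫ - ⟪y, n⟫| ≤ angle x y := calc
  |⟪x, n⟫ - ⟪y, n⟫| = |⟪x - y, n⟫| := by rw [inner_sub_left]
  _ ≤ ‖x - y‖ := by simpa [hn] using abs_real_inner_le_norm (x - y) n
  _ ≤ angle x y := norm_sub_le_angle hx hy

end InnerProductGeometry

theorem norm_cos_smul_add_sin_smul_s10 {x y : E} (hx : ‖x‖ = 1) (hy : ‖y‖ = 1)
    (hxy : ⟪x, y⟫ = 0) (θ : ℝ) : ‖cos θ • x + sin θ • y‖ = 1 := by
  have : ‖cos θ • x + sin θ • y‖ ^ 2 = 1 := by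
    rw [norm_add_sq_real, inner_smul_left, inner_smul_right, hxy, norm_smul, norm_smul, hx, hy]
    simp only [norm_eq_abs, mul_one, mul_zero, sq_abs]
    linarith [sin_sq_add_cos_sq θ]
  exact (pow_eq_one_iff_of_nonneg (norm_nonneg _) two_ne_zero).mp this

theorem inner_cos_smul_add_sin_smul_right {x y : E} (hy : ‖y‖ = 1) (hxy : ⟪x, y⟫ = 0)
    (θ : ℝ) : ⟪cos θ • x + sin θ • y, y⟫ = sin θ := by
  rw [inner_add_left, inner_smul_left, inner_smul_left, hxy, real_inner_self_eq_norm_sq, hy]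
  simp

end InnerProductSpace

section ArcTangent

variable {V : Type*} {p : V → EuclideanSpace ℝ (Fin 3)} {α : Sym2 V → ℝ}
  {n : EuclideanSpace ℝ (Fin 3)} {v u w : V}

theorem norm_arcTangentVec (huv : p u ≠ p v) (hn : ‖n‖ = 1) (horth : ⟪p u - p v, n⟫ = 0) :
    ‖arcTangentVec p α n v u‖ = 1 :=
  norm_cos_smul_add_sin_smul_s10 (norm_smul_inv_norm (sub_ne_zero.mpr huv)) hn
    (by rw [inner_smul_left, horth, mul_zero]) _

theorem inner_arcTangentVec (hn : ‖n‖ = 1) (horth : ⟪p u - p v, n⟫ = 0) :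
    ⟪arcTangentVec p α n v u, n⟫ = sin (α s(v, u)) :=
  inner_cos_smul_add_sin_smul_right hn (by rw [inner_smul_left, horth, mul_zero]) _

theorem abs_sin_sub_sin_le_angle_arcTangentVec (huv : p u ≠ p v) (hwv : p w ≠ p v)
    (hn : ‖n‖ = 1) (hu : ⟪p u - p v, n⟫ = 0) (hw : ⟪p w - p v, n⟫ = 0) :
    |sin (α s(v, u)) - sin (α s(v, w))| ≤
      angle (arcTangentVec p α n v u) (arcTangentVec p α n v w) := by
  rw [← inner_arcTangentVec hn hu, ← inner_arcTangentVec hn hw]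
  exact abs_inner_sub_inner_le_angle (norm_arcTangentVec huv hn hu)
    (norm_arcTangentVec hwv hn hw) hn

end ArcTangent

theorem arcsin_mem_Icc_zero_pi_div_four {x : ℝ} (h₀ : 0 ≤ x) (h₁ : x ≤ √2 / 2) :
    arcsin x ∈ Set.Icc 0 (π / 4) := by
  refine ⟨arcsin_nonneg.mpr h₀, ?_⟩
  rw [← sin_pi_div_four] at h₁
  exact (arcsin_le_iff_le_sin' ⟨by linarith [pi_pos], by linarith [pi_pos]⟩).mpr h₁

theorem one_div_le_abs_natCast_div_sub {m k : ℕ} (h : m ≠ k) {D : ℝ} (hD : 0 < D) :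
    1 / D ≤ |(m : ℝ) / D - k / D| := by
  rw [← sub_div, abs_div, abs_of_pos hD]
  gcongr
  exact_mod_cast Int.one_le_abs (sub_ne_zero.mpr (Int.ofNat_inj.not.mpr h))

/-- Theorem 3 of the paper: there is a constant `c > 0` such that for any
graph `G` of maximum degree at most `d ≥ 1` and any injective placement
of its vertices in the base plane `z = 0`, one can choose arc angles
`α e ∈ [0, π/4]` so that the resulting 3D arc diagram (whose arcs project
perpendicularly onto the given segments) has angular resolution at least
`c / d`. -/
theorem exists_arc_diagram_angular_resolution :
    ∃ c : ℝ, 0 < c ∧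
      ∀ (V : Type) [Fintype V] (G : SimpleGraph V) [DecidableRel G.Adj] (d : ℕ),
        1 ≤ d → G.maxDegree ≤ d →
        ∀ p : V → EuclideanSpace ℝ (Fin 3), Function.Injective p →
          (∀ v, p v 2 = 0) →
          ∃ α : Sym2 V → ℝ,
            (∀ e, α e ∈ Set.Icc 0 (π / 4)) ∧
            ∀ v u w : V, G.Adj v u → G.Adj v w → u ≠ w →
              c / d ≤ angle
                (arcTangentVec p α (EuclideanSpace.single 2 1) v u)
                (arcTangentVec p α (EuclideanSpace.single 2 1) v w) := by
  refine ⟨1 / 4, by norm_num, fun V _ G _ d hd hG p hp hp₂ => ?_⟩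
  obtain ⟨col, hcol_lt, hcol⟩ := G.exists_edge_coloring_of_maxDegree_le hd hG
  have hD : (0 : ℝ) < 4 * d := by positivity
  have hx : ∀ e, (col e : ℝ) / (4 * d) ∈ Set.Icc 0 (1 / 2) := fun e => by
    have : (col e : ℝ) + 1 ≤ 2 * d := by exact_mod_cast hcol_lt e
    constructor <;> [positivity; (rw [div_le_iff₀ hD]; linarith)]
  let α : Sym2 V → ℝ := fun e => arcsin ((col e : ℝ) / (4 * d))
  have hsin : ∀ e, sin (α e) = col e / (4 * d) := fun e =>
    sin_arcsin (by linarith [(hx e).1]) (by linarith [(hx e).2])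
  have horth : ∀ u v, ⟪p u - p v, EuclideanSpace.single 2 1⟫ = 0 := fun u v => by
    simp [EuclideanSpace.inner_single_right, hp₂]
  refine ⟨α, fun e => arcsin_mem_Icc_zero_pi_div_four (hx e).1
    ((hx e).2.trans (by linarith [one_lt_sqrt_two])), fun v u w hvu hvw huw => ?_⟩
  calc (1 / 4 : ℝ) / d = 1 / (4 * d) := by ring
    _ ≤ |(col s(v, u) : ℝ) / (4 * d) - col s(v, w) / (4 * d)| :=
      one_div_le_abs_natCast_div_sub (hcol v u w hvu hvw huw) hD
    _ = |sin (α s(v, u)) - sin (α s(v, w))| := by rw [hsin, hsin]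
    _ ≤ _ := abs_sin_sub_sin_le_angle_arcTangentVec (hp.ne hvu.ne') (hp.ne hvw.ne')
      (by simp) (horth u v) (horth w v)
end

section
/- For every constant c₁ > 0 there exists a constant c₂ > 0 such that the following holds. Let V be a finite type, G a simple graph on V, and d a natural number with 1 ≤ d and the maximum degree of G at most d. Let p : V → EuclideanSpace ℝ (Fin 3) be an injective map with p v 2 = 0 for every v, and suppose the planar straight-line drawing given by p has angular resolution at least c₁/d, i.e., for every vertex v and distinct neighbors u, w of v, the angle between p u − p v and p w − p v is at least c₁/d. Let n denote the unit vector (0,0,1). Then there exists an assignment α : Sym2 V → ℝ with α e ∈ [0, π/4] for all e, such that for every vertex v and every pair of distinct neighbors u, w of v, the vectors T(v,u) = cos(α ⟦(v,u)⟧) • (‖p u − p v‖⁻¹ • (p u − p v)) + sin(α ⟦(v,u)⟧) • n and the analogously defined T(v,w) form an angle of at least c₂/√d. -/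
open Real InnerProductGeometry

open scoped RealInnerProductSpace

/-!
Give the arc leaving a vertex in planar direction `x` the elevation
`(π/4) · fract((m/π) · arg x)` with `m = ⌈√d⌉`. Reversing `x` adds the integer `m` to
`(m/π) · arg x`, so both ends of an edge get the same elevation. Consider two arcs at a vertex
whose planar directions form the angle `θ ≥ c₁/d`. Their tangents are at least `θ/2` apart,
because elevations are at most `π/4`, and at least as far apart as their elevations. If
`θ ≥ π/(2m)` the first bound gives `Ω(1/√d)`. Otherwise the elevations differ by at least
`mθ/4 ≥ c₁/(4√d)`, because the elevation runs `m` times through `[0, π/4)` while the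
direction turns once around.
-/

section Tilt

variable {F : Type*} [NormedAddCommGroup F] [InnerProductSpace ℝ F] {u₁ u₂ n : F}

lemma le_angle_of_cos_angle_le {x y : F} {A : ℝ} (hA₀ : 0 ≤ A) (hAπ : A ≤ π)
    (h : cos (angle x y) ≤ cos A) : A ≤ angle x y :=
  (strictAntiOn_cos.le_iff_ge ⟨angle_nonneg x y, angle_le_pi x y⟩ ⟨hA₀, hAπ⟩).mp h

lemma norm_cos_smul_add_sin_smul_s12 (hu : ‖u₁‖ = 1) (hn : ‖n‖ = 1) (h : ⟪u₁, n⟫ = 0) (a : ℝ) :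
    ‖cos a • u₁ + sin a • n‖ = 1 := by
  have hsq : ‖cos a • u₁ + sin a • n‖ ^ 2 = 1 := by
    rw [norm_add_sq_real, norm_smul, norm_smul, real_inner_smul_left, real_inner_smul_right, h,
      hu, hn]
    simp [sq_abs]
  exact (pow_eq_one_iff_of_nonneg (norm_nonneg _) two_ne_zero).1 hsq

lemma cos_angle_cos_smul_add_sin_smul (hu₁ : ‖u₁‖ = 1) (hu₂ : ‖u₂‖ = 1) (hn : ‖n‖ = 1)
    (h₁ : ⟪u₁, n⟫ = 0) (h₂ : ⟪u₂, n⟫ = 0) (a₁ a₂ : ℝ) :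
    cos (angle (cos a₁ • u₁ + sin a₁ • n) (cos a₂ • u₂ + sin a₂ • n)) =
      cos a₁ * cos a₂ * cos (angle u₁ u₂) + sin a₁ * sin a₂ := by
  have hnn : ⟪n, n⟫ = 1 := by rw [real_inner_self_eq_norm_sq, hn, one_pow]
  rw [cos_angle, cos_angle, norm_cos_smul_add_sin_smul_s12 hu₁ hn h₁,
    norm_cos_smul_add_sin_smul_s12 hu₂ hn h₂, hu₁, hu₂]
  simp only [inner_add_left, inner_add_right, real_inner_smul_left, real_inner_smul_right, h₁,
    real_inner_comm u₂ n, h₂, hnn]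
  ring

lemma abs_sub_le_angle_cos_smul_add_sin_smul (hu₁ : ‖u₁‖ = 1) (hu₂ : ‖u₂‖ = 1) (hn : ‖n‖ = 1)
    (h₁ : ⟪u₁, n⟫ = 0) (h₂ : ⟪u₂, n⟫ = 0) {a₁ a₂ : ℝ} (ha₁ : a₁ ∈ Set.Icc 0 (π / 2))
    (ha₂ : a₂ ∈ Set.Icc 0 (π / 2)) :
    |a₁ - a₂| ≤ angle (cos a₁ • u₁ + sin a₁ • n) (cos a₂ • u₂ + sin a₂ • n) := by
  have hc₁ := cos_nonneg_of_mem_Icc ⟨by linarith [ha₁.1, pi_pos], ha₁.2⟩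
  have hc₂ := cos_nonneg_of_mem_Icc ⟨by linarith [ha₂.1, pi_pos], ha₂.2⟩
  refine le_angle_of_cos_angle_le (abs_nonneg _)
    (abs_le.2 ⟨by linarith [ha₁.1, ha₂.2, pi_pos], by linarith [ha₁.2, ha₂.1, pi_pos]⟩) ?_
  rw [cos_angle_cos_smul_add_sin_smul hu₁ hu₂ hn h₁ h₂, cos_abs, cos_sub]
  nlinarith [mul_nonneg hc₁ hc₂, cos_le_one (angle u₁ u₂)]

lemma half_angle_le_angle_cos_smul_add_sin_smul (hu₁ : ‖u₁‖ = 1) (hu₂ : ‖u₂‖ = 1)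
    (hn : ‖n‖ = 1) (h₁ : ⟪u₁, n⟫ = 0) (h₂ : ⟪u₂, n⟫ = 0) {a₁ a₂ : ℝ}
    (ha₁ : a₁ ∈ Set.Icc 0 (π / 4)) (ha₂ : a₂ ∈ Set.Icc 0 (π / 4)) :
    angle u₁ u₂ / 2 ≤ angle (cos a₁ • u₁ + sin a₁ • n) (cos a₂ • u₂ + sin a₂ • n) := by
  set θ := angle u₁ u₂
  have hθ₀ : 0 ≤ θ := angle_nonneg u₁ u₂
  have hθπ : θ ≤ π := angle_le_pi u₁ u₂
  have hcos_ge (a : ℝ) (ha : a ∈ Set.Icc 0 (π / 4)) : √2 / 2 ≤ cos a := by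
    rw [← cos_pi_div_four]
    exact cos_le_cos_of_nonneg_of_le_pi ha.1 (by linarith [pi_pos]) ha.2
  have hcc : 1 / 2 ≤ cos a₁ * cos a₂ := by
    have h₁ := hcos_ge a₁ ha₁
    have h₂ := hcos_ge a₂ ha₂
    nlinarith [sq_sqrt (show (0 : ℝ) ≤ 2 by norm_num), sqrt_nonneg 2]
  have hhalf : cos (θ / 2) ^ 2 = 1 / 2 + cos θ / 2 := by
    rw [cos_sq]; ring_nf
  have hhalf₀ : 0 ≤ cos (θ / 2) := cos_nonneg_of_mem_Icc ⟨by linarith, by linarith⟩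
  refine le_angle_of_cos_angle_le (by linarith) (by linarith) ?_
  rw [cos_angle_cos_smul_add_sin_smul hu₁ hu₂ hn h₁ h₂]
  -- `cos a₁ cos a₂ + sin a₁ sin a₂ = cos (a₁ - a₂) ≤ 1` and `1 + cos θ = 2 cos² (θ/2)`
  nlinarith [cos_sub a₁ a₂, cos_le_one (a₁ - a₂), cos_le_one θ, cos_le_one (θ / 2)]

end Tilt

lemma le_abs_add_intCast {t : ℝ} (h : t ≤ 1 / 2) (k : ℤ) : t ≤ |t + k| := by
  rcases le_or_gt 0 k with hk | hk
  · have : (0 : ℝ) ≤ k := by exact_mod_cast hk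
    exact le_abs.2 (Or.inl (by linarith))
  · have : (k : ℝ) ≤ -1 := by exact_mod_cast Int.le_sub_one_of_lt hk
    exact le_abs.2 (Or.inr (by linarith))

lemma le_abs_fract_sub_fract {x y t : ℝ} (h : t ≤ 1 / 2) {k : ℤ}
    (hxy : x - y = t + k ∨ x - y = -t + k) : t ≤ |Int.fract x - Int.fract y| := by
  unfold Int.fract
  rcases hxy with hxy | hxy
  · convert le_abs_add_intCast h (k - ⌊x⌋ + ⌊y⌋) using 2
    push_cast; linarith
  · convert le_abs_add_intCast h (⌊x⌋ - ⌊y⌋ - k) using 1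
    rw [← abs_neg]; push_cast; congr 1; linarith

noncomputable def planeToComplex (x : EuclideanSpace ℝ (Fin 3)) : ℂ := ⟨x 0, x 1⟩

lemma planeToComplex_neg (x : EuclideanSpace ℝ (Fin 3)) :
    planeToComplex (-x) = -planeToComplex x := by
  apply Complex.ext <;> simp [planeToComplex]

lemma inner_planeToComplex {x : EuclideanSpace ℝ (Fin 3)} (hx : x 2 = 0)
    (y : EuclideanSpace ℝ (Fin 3)) : ⟪planeToComplex x, planeToComplex y⟫ = ⟪x, y⟫ := by
  simp [planeToComplex, Complex.inner, PiLp.inner_apply, Fin.sum_univ_three, hx, mul_comm]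

lemma norm_planeToComplex {x : EuclideanSpace ℝ (Fin 3)} (hx : x 2 = 0) :
    ‖planeToComplex x‖ = ‖x‖ := by
  rw [norm_eq_sqrt_real_inner, norm_eq_sqrt_real_inner x, inner_planeToComplex hx]

lemma angle_planeToComplex {x y : EuclideanSpace ℝ (Fin 3)} (hx : x 2 = 0) (hy : y 2 = 0) :
    angle (planeToComplex x) (planeToComplex y) = angle x y := by
  rw [angle, angle, inner_planeToComplex hx, norm_planeToComplex hx, norm_planeToComplex hy]

lemma planeToComplex_ne_zero {x : EuclideanSpace ℝ (Fin 3)} (hx : x 2 = 0) (h : x ≠ 0) :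
    planeToComplex x ≠ 0 := by
  rwa [← norm_ne_zero_iff, norm_planeToComplex hx, norm_ne_zero_iff]

lemma exists_arg_sub_arg_eq_angle {x y : EuclideanSpace ℝ (Fin 3)} (hx : x ≠ 0) (hy : y ≠ 0)
    (hx₂ : x 2 = 0) (hy₂ : y 2 = 0) :
    ∃ k : ℤ, (planeToComplex x).arg - (planeToComplex y).arg = angle x y + 2 * π * k ∨
      (planeToComplex x).arg - (planeToComplex y).arg = -angle x y + 2 * π * k := by
  have hzx := planeToComplex_ne_zero hx₂ hx
  have hzy := planeToComplex_ne_zero hy₂ hy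
  obtain ⟨k, hk⟩ := Real.Angle.angle_eq_iff_two_pi_dvd_sub.1
    (Complex.arg_div_coe_angle hzx hzy).symm
  rw [← angle_planeToComplex hx₂ hy₂, Complex.angle_eq_abs_arg hzx hzy]
  refine ⟨k, (abs_choice (planeToComplex x / planeToComplex y).arg).imp (fun h ↦ ?_) (fun h ↦ ?_)⟩ <;>
    linarith

noncomputable def arcElevation (m : ℕ) (x : EuclideanSpace ℝ (Fin 3)) : ℝ :=
  π / 4 * Int.fract (m / π * (planeToComplex x).arg)

lemma arcElevation_mem_Icc (m : ℕ) (x : EuclideanSpace ℝ (Fin 3)) :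
    arcElevation m x ∈ Set.Icc 0 (π / 4) := by
  have h₀ := Int.fract_nonneg (m / π * (planeToComplex x).arg)
  have h₁ := Int.fract_lt_one (m / π * (planeToComplex x).arg)
  exact ⟨by unfold arcElevation; positivity, by unfold arcElevation; nlinarith [pi_pos]⟩

lemma arcElevation_neg (m : ℕ) (x : EuclideanSpace ℝ (Fin 3)) :
    arcElevation m (-x) = arcElevation m x := by
  unfold arcElevation
  rw [planeToComplex_neg]
  by_cases hx : planeToComplex x = 0
  · rw [hx, neg_zero]
  obtain ⟨k, hk⟩ := Real.Angle.angle_eq_iff_two_pi_dvd_sub.1 (Complex.arg_neg_coe_angle hx)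
  congr 1
  refine Int.fract_eq_fract.2 ⟨m * (1 + 2 * k), ?_⟩
  rw [sub_eq_iff_eq_add.1 hk]
  push_cast
  field_simp
  ring

lemma mul_angle_le_abs_arcElevation_sub (m : ℕ) {x y : EuclideanSpace ℝ (Fin 3)} (hx : x ≠ 0)
    (hy : y ≠ 0) (hx₂ : x 2 = 0) (hy₂ : y 2 = 0) (hθ : angle x y ≤ π / (2 * m)) :
    m * angle x y / 4 ≤ |arcElevation m x - arcElevation m y| := by
  have ht : m / π * angle x y ≤ 1 / 2 := by
    rcases Nat.eq_zero_or_pos m with hm | hm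
    · simp [hm]
    rw [le_div_iff₀ (by positivity)] at hθ
    rw [div_mul_eq_mul_div, div_le_iff₀ pi_pos]
    linarith
  obtain ⟨k, hk⟩ := exists_arg_sub_arg_eq_angle hx hy hx₂ hy₂
  have hfract : m / π * angle x y ≤
      |Int.fract (m / π * (planeToComplex x).arg) - Int.fract (m / π * (planeToComplex y).arg)| := by
    refine le_abs_fract_sub_fract ht (k := 2 * m * k) ?_
    rw [← mul_sub]
    rcases hk with hk | hk <;> [left; right] <;> rw [hk] <;> push_cast <;> field_simp
  unfold arcElevation
  rw [← mul_sub, abs_mul, abs_of_pos (by positivity)]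
  calc (m : ℝ) * angle x y / 4 = π / 4 * (m / π * angle x y) := by field_simp
    _ ≤ _ := by gcongr

lemma min_le_angle_arcTangent (m : ℕ) {x y : EuclideanSpace ℝ (Fin 3)} (hx : x ≠ 0)
    (hy : y ≠ 0) (hx₂ : x 2 = 0) (hy₂ : y 2 = 0) :
    min (π / (4 * m)) (m * angle x y / 4) ≤
      angle (cos (arcElevation m x) • (‖x‖⁻¹ • x) +
          sin (arcElevation m x) • EuclideanSpace.single 2 1)
        (cos (arcElevation m y) • (‖y‖⁻¹ • y) +
          sin (arcElevation m y) • EuclideanSpace.single 2 1) := by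
  have hunit {z : EuclideanSpace ℝ (Fin 3)} (hz : z ≠ 0) : ‖‖z‖⁻¹ • z‖ = 1 :=
    norm_smul_inv_norm hz
  have hn : ‖(EuclideanSpace.single 2 1 : EuclideanSpace ℝ (Fin 3))‖ = 1 := by simp
  have horth {z : EuclideanSpace ℝ (Fin 3)} (hz : z 2 = 0) :
      ⟪‖z‖⁻¹ • z, EuclideanSpace.single 2 1⟫ = 0 := by
    simp [EuclideanSpace.inner_single_right, hz]
  have hangle : angle (‖x‖⁻¹ • x) (‖y‖⁻¹ • y) = angle x y := by
    rw [angle_smul_left_of_pos _ _ (by positivity), angle_smul_right_of_pos _ _ (by positivity)]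
  have hIcc (z : EuclideanSpace ℝ (Fin 3)) : arcElevation m z ∈ Set.Icc 0 (π / 2) :=
    Set.Icc_subset_Icc_right (by linarith [pi_pos]) (arcElevation_mem_Icc m z)
  by_cases hθ : angle x y ≤ π / (2 * m)
  · exact (min_le_right _ _).trans <| (mul_angle_le_abs_arcElevation_sub m hx hy hx₂ hy₂ hθ).trans
      (abs_sub_le_angle_cos_smul_add_sin_smul (hunit hx) (hunit hy) hn (horth hx₂) (horth hy₂)
        (hIcc x) (hIcc y))
  · have hhalf := half_angle_le_angle_cos_smul_add_sin_smul (hunit hx) (hunit hy) hn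
      (horth hx₂) (horth hy₂) (arcElevation_mem_Icc m x) (arcElevation_mem_Icc m y)
    rw [hangle] at hhalf
    have h4m : π / (4 * m) = π / (2 * m) / 2 := by ring
    linarith [min_le_left (π / (4 * m)) (m * angle x y / 4)]

lemma min_div_sqrt_le_min {c d θ m : ℝ} (hc : 0 < c) (hd : 1 ≤ d) (hm₁ : √d ≤ m)
    (hm₂ : m ≤ 2 * √d) (hθ : c / d ≤ θ) :
    min (π / 8) (c / 4) / √d ≤ min (π / (4 * m)) (m * θ / 4) := by
  have hs : 1 ≤ √d := one_le_sqrt.2 hd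
  have hsd : √d * √d = d := mul_self_sqrt (by linarith)
  have hs₀ : 0 < √d := by linarith
  refine le_min ((div_le_div_of_nonneg_right (min_le_left _ _) hs₀.le).trans ?_)
    ((div_le_div_of_nonneg_right (min_le_right _ _) hs₀.le).trans ?_)
  · rw [div_div, div_le_div_iff₀ (by positivity) (by linarith)]
    nlinarith [pi_pos]
  · have hcθ : c ≤ θ * d := (div_le_iff₀ (by linarith)).1 hθ
    rw [div_div, div_le_iff₀ (by linarith)]
    have hθm : θ * √d ≤ θ * m :=
      mul_le_mul_of_nonneg_left hm₁ ((div_pos hc (by linarith)).le.trans hθ)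
    nlinarith [mul_le_mul_of_nonneg_right hθm hs₀.le]

/-- Theorem 5 of the paper: for every `c₁ > 0` there is a `c₂ > 0` such
that any straight-line drawing in the base plane `z = 0` of a graph `G`
of maximum degree at most `d ≥ 1`, with angular resolution at least
`c₁ / d`, can be lifted (keeping the same vertex positions, every arc
projecting perpendicularly onto its segment) to a 3D arc diagram with
angular resolution at least `c₂ / √d`. -/
theorem exists_arc_diagram_from_good_resolution_drawing :
    ∀ c₁ : ℝ, 0 < c₁ →
      ∃ c₂ : ℝ, 0 < c₂ ∧
        ∀ (V : Type) [Fintype V] (G : SimpleGraph V) [DecidableRel G.Adj]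
          (d : ℕ), 1 ≤ d → G.maxDegree ≤ d →
          ∀ p : V → EuclideanSpace ℝ (Fin 3), Function.Injective p →
            (∀ v, p v 2 = 0) →
            (∀ v u w : V, G.Adj v u → G.Adj v w → u ≠ w →
              c₁ / d ≤ angle (p u - p v) (p w - p v)) →
            ∃ α : Sym2 V → ℝ,
              (∀ e, α e ∈ Set.Icc 0 (π / 4)) ∧
              ∀ v u w : V, G.Adj v u → G.Adj v w → u ≠ w →
                c₂ / Real.sqrt d ≤ angle
                  (arcTangentVec p α (EuclideanSpace.single 2 1) v u)
                  (arcTangentVec p α (EuclideanSpace.single 2 1) v w) := by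
  intro c₁ hc₁
  refine ⟨min (π / 8) (c₁ / 4), by positivity, ?_⟩
  intro V _ G _ d hd _ p hp hp₂ hres
  have hd' : (1 : ℝ) ≤ d := by exact_mod_cast hd
  set m := ⌈√(d : ℝ)⌉₊
  have hm₁ : √d ≤ m := Nat.le_ceil _
  have hm₂ : (m : ℝ) ≤ 2 * √d := by
    linarith [Nat.ceil_lt_add_one (sqrt_nonneg (d : ℝ)), one_le_sqrt.2 hd']
  let α : Sym2 V → ℝ := Sym2.lift ⟨fun a b ↦ arcElevation m (p b - p a), fun a b ↦ by
    beta_reduce; rw [← neg_sub, arcElevation_neg]⟩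
  have hplanar (a b : V) : (p b - p a) 2 = 0 := by simp [hp₂]
  refine ⟨α, fun e ↦ e.ind fun a b ↦ arcElevation_mem_Icc m _, fun v u w hu hw huw ↦ ?_⟩
  exact (min_div_sqrt_le_min hc₁ hd' hm₁ hm₂ (hres v u w hu hw huw)).trans
    (min_le_angle_arcTangent m (sub_ne_zero.2 (hp.ne hu.ne')) (sub_ne_zero.2 (hp.ne hw.ne'))
      (hplanar v u) (hplanar v w))
end
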